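/- arXiv:2505.02101 — 9 statements merged into one kernel-verified Lean document; each statement's English description precedes it below -/
import Mathlib

section
/- Let X, Y be real Hilbert spaces, f, g : X × Y → ℝ, and fix x ∈ X. Suppose: (i) g(x,·) is differentiable in y with gradient ∇₂g(x,·), and H(x,·) : Y → (Y →L[ℝ] Y) is a Hessian field of g(x,·) (for every y, ∇₂g(x,·) has Fréchet derivative H(x,y) at y) with ⟨H(x,y)v, v⟩ ≥ μ‖v‖² (μ > 0), ‖H(x,y) − H(x,y')‖_op ≤ L_{g,2}‖y − y'‖, and every H(x,y) invertible; (ii) y*(x) ∈ Y satisfies ∇₂g(x, y*(x)) = 0; (iii) f(·,·) is differentiable with partial gradients ∇₁f, ∇₂f, J : X × Y → (Y →L[ℝ] X) is a map (playing the role of the cross derivative ∇²₁₂g), Φ(x) := f(x, y*(x)) has gradient ∇Φ(x), and the approximate hypergradient ∇̂Φ(x,y) := ∇₁f(x,y) − J(x,y)(u*(x,y)), with u*(x,y) := H(x,y)⁻¹(∇₂f(x,y)), satisfies ‖∇̂Φ(x,y) − ∇Φ(x)‖ ≤ C‖y*(x) − y‖ for all y and some constant C ≥ 0. Then for every y ∈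 Y, setting y⁺ := y − H(x,y)⁻¹(∇₂g(x,y)), one has ‖∇̂Φ(x, y⁺) − ∇Φ(x)‖ ≤ (C · L_{g,2}/(2μ)) · ‖y*(x) − y‖². -/
/-!
Since `∇₂g(x, y*) = 0`, the Newton error is `y* − y⁺ = H(x,y)⁻¹ r`, where
`r = ∇₂g(x,y*) − ∇₂g(x,y) − H(x,y)(y* − y)` is the first-order Taylor remainder of `∇₂g(x,·)`.
The Lipschitz Hessian gives `‖r‖ ≤ L_{g,2}/2 · ‖y* − y‖²` and coercivity gives `‖H(x,y)⁻¹‖ ≤ 1/μ`,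
so `‖y* − y⁺‖ ≤ L_{g,2}/(2μ) · ‖y* − y‖²`; the linear hypergradient bound applied at `y⁺` concludes.
-/

open scoped RealInnerProductSpace

open Set in
theorem norm_sub_sub_fderiv_le_of_lipschitz_fderiv
    {E F : Type*} [NormedAddCommGroup E] [NormedSpace ℝ E] [NormedAddCommGroup F] [NormedSpace ℝ F]
    {G : E → F} {G' : E → E →L[ℝ] F} {L : ℝ} (hG : ∀ y, HasFDerivAt G (G' y) y)
    (hLip : ∀ a b, ‖G' a - G' b‖ ≤ L * ‖a - b‖) (y z : E) :
    ‖G z - G y - G' y (z - y)‖ ≤ L / 2 * ‖z - y‖ ^ 2 := by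
  set d := z - y
  have hderiv (t : ℝ) : HasDerivAt (fun t : ℝ => G (y + t • d) - G y - t • G' y d)
      (G' (y + t • d) d - G' y d) t := by
    have hline : HasDerivAt (fun t : ℝ => y + t • d) d t := by
      simpa using ((hasDerivAt_id t).smul_const d).const_add y
    simpa using (((hG _).comp_hasDerivAt t hline).sub_const (G y)).fun_sub
      ((hasDerivAt_id t).smul_const (G' y d))
  have hbound (t : ℝ) (ht : t ∈ Ico (0 : ℝ) 1) :
      ‖G' (y + t • d) d - G' y d‖ ≤ L * t * ‖d‖ ^ 2 :=
    calc ‖G' (y + t • d) d - G' y d‖ = ‖(G' (y + t • d) - G' y) d‖ := rfl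
      _ ≤ ‖G' (y + t • d) - G' y‖ * ‖d‖ := (G' (y + t • d) - G' y).le_opNorm d
      _ ≤ L * ‖t • d‖ * ‖d‖ := by gcongr; simpa using hLip (y + t • d) y
      _ = L * t * ‖d‖ ^ 2 := by rw [norm_smul, Real.norm_of_nonneg ht.1]; ring
  have hB (t : ℝ) : HasDerivAt (fun t : ℝ => L / 2 * t ^ 2 * ‖d‖ ^ 2) (L * t * ‖d‖ ^ 2) t :=
    (((hasDerivAt_pow 2 t).const_mul (L / 2)).mul_const (‖d‖ ^ 2)).congr_deriv (by ring)
  have := image_norm_le_of_norm_deriv_right_le_deriv_boundary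
    (fun t _ => (hderiv t).continuousAt.continuousWithinAt)
    (fun t _ => (hderiv t).hasDerivWithinAt) (by simp) hB hbound (right_mem_Icc.2 zero_le_one)
  simpa [d] using this

theorem mul_norm_le_norm_apply_of_coercive
    {E : Type*} [NormedAddCommGroup E] [InnerProductSpace ℝ E] {T : E →L[ℝ] E} {μ : ℝ}
    (hT : ∀ v, μ * ‖v‖ ^ 2 ≤ ⟪T v, v⟫) (v : E) : μ * ‖v‖ ≤ ‖T v‖ := by
  rcases eq_or_ne v 0 with rfl | hv
  · simp
  refine le_of_mul_le_mul_right ?_ (norm_pos_iff.2 hv)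
  calc μ * ‖v‖ * ‖v‖ = μ * ‖v‖ ^ 2 := by ring
    _ ≤ ⟪T v, v⟫ := hT v
    _ ≤ ‖T v‖ * ‖v‖ := real_inner_le_norm _ _

theorem norm_sub_newton_step_le
    {E : Type*} [NormedAddCommGroup E] [InnerProductSpace ℝ E]
    {G : E → E} {G' : E → E →L[ℝ] E} {L μ : ℝ} (hμ : 0 < μ) (hG : ∀ y, HasFDerivAt G (G' y) y)
    (hLip : ∀ a b, ‖G' a - G' b‖ ≤ L * ‖a - b‖) {y₀ y : E} (hy₀ : G y₀ = 0)
    (e : E ≃L[ℝ] E) (he : (e : E →L[ℝ] E) = G' y) (hcoerc : ∀ v, μ * ‖v‖ ^ 2 ≤ ⟪G' y v, v⟫) :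
    ‖y₀ - (y - e.symm (G y))‖ ≤ L / (2 * μ) * ‖y₀ - y‖ ^ 2 := by
  set r := G y₀ - G y - G' y (y₀ - y)
  have hstep : y₀ - (y - e.symm (G y)) = -e.symm r := by
    simp only [r, hy₀, ← he, ContinuousLinearEquiv.coe_coe, map_sub, e.symm_apply_apply, map_zero]
    abel
  have hsymm : μ * ‖e.symm r‖ ≤ ‖r‖ := by
    simpa [← he] using mul_norm_le_norm_apply_of_coercive hcoerc (e.symm r)
  rw [hstep, norm_neg, div_mul_eq_mul_div, le_div_iff₀ (by positivity)]
  linarith [norm_sub_sub_fderiv_le_of_lipschitz_fderiv hG hLip y y₀]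

theorem stmt_1_general
    {X Y : Type*} [NormedAddCommGroup X] [InnerProductSpace ℝ X]
    [NormedAddCommGroup Y] [InnerProductSpace ℝ Y]
    (x : X)
    (grad2g : X → Y → Y) (H : X → Y → Y →L[ℝ] Y) (Hinv : X → Y → (Y ≃L[ℝ] Y))
    (grad1f : X × Y → X) (grad2f : X × Y → Y) (J : X × Y → (Y →L[ℝ] X))
    (ystar : X → Y) (gradPhi : X → X)
    (μ Lg2 C : ℝ) (hμ : 0 < μ) (hC : 0 ≤ C)
    -- (i) Hessian field of g(x,·) with coercivity, Lipschitz continuity and invertibility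
    (hHess : ∀ y : Y, HasFDerivAt (grad2g x) (H x y) y)
    (hcoerc : ∀ y v : Y, μ * ‖v‖ ^ 2 ≤ ⟪H x y v, v⟫)
    (hLip : ∀ y y' : Y, ‖H x y - H x y'‖ ≤ Lg2 * ‖y - y'‖)
    (hHinv : ∀ y : Y, ((Hinv x y : Y →L[ℝ] Y)) = H x y)
    -- (ii) lower-level optimality
    (hstar : grad2g x (ystar x) = 0)
    -- (iii) differentiability of f and Φ, and the hypergradient approximation error bound
    (hhyper : ∀ y : Y,
      ‖(grad1f (x, y) - J (x, y) ((Hinv x y).symm (grad2f (x, y)))) - gradPhi x‖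
        ≤ C * ‖ystar x - y‖) :
    ∀ y : Y,
      ‖(grad1f (x, y - (Hinv x y).symm (grad2g x y)) -
          J (x, y - (Hinv x y).symm (grad2g x y))
            ((Hinv x (y - (Hinv x y).symm (grad2g x y))).symm
              (grad2f (x, y - (Hinv x y).symm (grad2g x y))))) - gradPhi x‖
        ≤ C * Lg2 / (2 * μ) * ‖ystar x - y‖ ^ 2 := by
  intro y
  have hnewton := norm_sub_newton_step_le hμ hHess hLip hstar (Hinv x y) (hHinv y) (hcoerc y)
  calc _ ≤ C * ‖ystar x - (y - (Hinv x y).symm (grad2g x y))‖ := hhyper _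
    _ ≤ C * (Lg2 / (2 * μ) * ‖ystar x - y‖ ^ 2) := by gcongr
    _ = C * Lg2 / (2 * μ) * ‖ystar x - y‖ ^ 2 := by ring

/-- Eq. (5) of the paper: a single exact Newton step on the lower-level problem improves
the hypergradient approximation error from linear to quadratic in `‖y*(x) − y‖`. -/
theorem stmt_1
    {X Y : Type*} [NormedAddCommGroup X] [InnerProductSpace ℝ X] [CompleteSpace X]
    [NormedAddCommGroup Y] [InnerProductSpace ℝ Y] [CompleteSpace Y]
    (f g : X × Y → ℝ) (x : X)
    (grad2g : X → Y → Y) (H : X → Y → Y →L[ℝ] Y) (Hinv : X → Y → (Y ≃L[ℝ] Y))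
    (grad1f : X × Y → X) (grad2f : X × Y → Y) (J : X × Y → (Y →L[ℝ] X))
    (ystar : X → Y) (gradPhi : X → X)
    (μ Lg2 C : ℝ) (hμ : 0 < μ) (hC : 0 ≤ C)
    -- (i) Hessian field of g(x,·) with coercivity, Lipschitz continuity and invertibility
    (hg : ∀ y : Y, HasGradientAt (fun y' => g (x, y')) (grad2g x y) y)
    (hHess : ∀ y : Y, HasFDerivAt (grad2g x) (H x y) y)
    (hcoerc : ∀ y v : Y, μ * ‖v‖ ^ 2 ≤ ⟪H x y v, v⟫)
    (hLip : ∀ y y' : Y, ‖H x y - H x y'‖ ≤ Lg2 * ‖y - y'‖)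
    (hHinv : ∀ y : Y, ((Hinv x y : Y →L[ℝ] Y)) = H x y)
    -- (ii) lower-level optimality
    (hstar : grad2g x (ystar x) = 0)
    -- (iii) differentiability of f and Φ, and the hypergradient approximation error bound
    (hf1 : ∀ p : X × Y, HasGradientAt (fun x' => f (x', p.2)) (grad1f p) p.1)
    (hf2 : ∀ p : X × Y, HasGradientAt (fun y' => f (p.1, y')) (grad2f p) p.2)
    (hPhi : HasGradientAt (fun x' => f (x', ystar x')) (gradPhi x) x)
    (hhyper : ∀ y : Y,
      ‖(grad1f (x, y) - J (x, y) ((Hinv x y).symm (grad2f (x, y)))) - gradPhi x‖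
        ≤ C * ‖ystar x - y‖) :
    ∀ y : Y,
      ‖(grad1f (x, y - (Hinv x y).symm (grad2g x y)) -
          J (x, y - (Hinv x y).symm (grad2g x y))
            ((Hinv x (y - (Hinv x y).symm (grad2g x y))).symm
              (grad2f (x, y - (Hinv x y).symm (grad2g x y))))) - gradPhi x‖
        ≤ C * Lg2 / (2 * μ) * ‖ystar x - y‖ ^ 2 :=
  stmt_1_general x grad2g H Hinv grad1f grad2f J ystar gradPhi μ Lg2 C hμ hC hHess hcoerc hLip hHinv
    hstar hhyper
end

section
/- Let X, Y be real Hilbert spaces, μ, L_{f,1}, L_{g,1}, L_{g,2}, r_u > 0, and let y* : X → Y satisfy ‖y*(x) − y*(x')‖ ≤ (L_{g,1}/μ)‖x − x'‖ for all x, x'. Let H : X → (Y →L[ℝ] Y), b : X → Y, and u* : X → Y satisfy, for every x: H(x)(u*(x)) = b(x), ‖H(x)v‖ ≥ μ‖v‖ for all v ∈ Y, and ‖u*(x)‖ ≤ r_u. Assume the joint Lipschitz bounds ‖b(x) − b(x')‖ ≤ L_{f,1}(‖x − x'‖ + ‖y*(x) − y*(x')‖) and ‖H(x) − H(x')‖_op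 ≤ L_{g,2}(‖x − x'‖ + ‖y*(x) − y*(x')‖) for all x, x'. Then ‖u*(x) − u*(x')‖ ≤ (L_u/μ)‖x − x'‖ for all x, x', where L_u := (L_{f,1} + L_{g,2} r_u)(1 + L_{g,1}/μ). -/
/-- Second inequality of the auxiliary lemma (eq. y*-and-u*): the Hessian-inverse-vector
product map `u*(x)` is `(L_u/μ)`-Lipschitz, where
`L_u = (L_{f,1} + L_{g,2} r_u)(1 + L_{g,1}/μ)`. -/
theorem stmt_3
    {X Y : Type*} [NormedAddCommGroup X] [InnerProductSpace ℝ X]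
    [NormedAddCommGroup Y] [InnerProductSpace ℝ Y]
    (μ Lf1 Lg1 Lg2 ru : ℝ)
    (hμ : 0 < μ) (hLf1 : 0 < Lf1) (hLg1 : 0 < Lg1) (hLg2 : 0 < Lg2) (hru : 0 < ru)
    (ystar : X → Y)
    (hystar : ∀ x x' : X, ‖ystar x - ystar x'‖ ≤ Lg1 / μ * ‖x - x'‖)
    (H : X → Y →L[ℝ] Y) (b : X → Y) (ustar : X → Y)
    (hHu : ∀ x : X, H x (ustar x) = b x)
    (hHlow : ∀ (x : X) (v : Y), μ * ‖v‖ ≤ ‖H x v‖)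
    (hub : ∀ x : X, ‖ustar x‖ ≤ ru)
    (hbLip : ∀ x x' : X, ‖b x - b x'‖ ≤ Lf1 * (‖x - x'‖ + ‖ystar x - ystar x'‖))
    (hHLip : ∀ x x' : X, ‖H x - H x'‖ ≤ Lg2 * (‖x - x'‖ + ‖ystar x - ystar x'‖)) :
    ∀ x x' : X,
      ‖ustar x - ustar x'‖ ≤ (Lf1 + Lg2 * ru) * (1 + Lg1 / μ) / μ * ‖x - x'‖ := by
  intro x x'
  have hd : ‖x - x'‖ + ‖ystar x - ystar x'‖ ≤ (1 + Lg1 / μ) * ‖x - x'‖ := by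
    have := hystar x x'
    nlinarith [norm_nonneg (x - x')]
  have key : μ * ‖ustar x - ustar x'‖ ≤
      (Lf1 + Lg2 * ru) * ((1 + Lg1 / μ) * ‖x - x'‖) := by
    have h1 := hHlow x (ustar x - ustar x')
    have h2 : H x (ustar x - ustar x') = (b x - b x') + (H x' - H x) (ustar x') := by
      simp only [map_sub, hHu, ContinuousLinearMap.sub_apply]
      abel
    have h3 : ‖H x (ustar x - ustar x')‖ ≤ ‖b x - b x'‖ + ‖H x' - H x‖ * ‖ustar x'‖ := by
      rw [h2]
      exact le_trans (norm_add_le _ _) (by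
        gcongr
        exact (H x' - H x).le_opNorm _)
    have h4 := hbLip x x'
    have h5 : ‖H x' - H x‖ ≤ Lg2 * (‖x - x'‖ + ‖ystar x - ystar x'‖) := by
      have := hHLip x' x
      rw [norm_sub_rev (x' : X) x, norm_sub_rev (ystar x')] at this
      exact this
    have h6 := hub x'
    have h7 : (0:ℝ) ≤ ‖x - x'‖ + ‖ystar x - ystar x'‖ := by positivity
    have h8 : ‖H x' - H x‖ * ‖ustar x'‖ ≤ Lg2 * (‖x - x'‖ + ‖ystar x - ystar x'‖) * ru :=
      mul_le_mul h5 h6 (norm_nonneg _) (by positivity)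
    have h9 : (Lf1 + Lg2 * ru) * (‖x - x'‖ + ‖ystar x - ystar x'‖) ≤
        (Lf1 + Lg2 * ru) * ((1 + Lg1 / μ) * ‖x - x'‖) := by
      have : (0:ℝ) ≤ Lf1 + Lg2 * ru := by positivity
      exact mul_le_mul_of_nonneg_left hd this
    nlinarith
  rw [div_mul_eq_mul_div, le_div_iff₀ hμ]
  nlinarith [key]
end

section
/- Let Y be a real Hilbert space, h : Y → ℝ differentiable with gradient ∇h, and H : Y → (Y →L[ℝ] Y) a Hessian field of h (for every y, ∇h has Fréchet derivative H(y) at y) such that each H(y) is self-adjoint, μ‖v‖² ≤ ⟨H(y)v, v⟩ ≤ L_{g,1}‖v‖² for all y, v (with 0 < μ ≤ L_{g,1}), and ‖H(y) − H(y')‖_op ≤ L_{g,2}‖y − y'‖. Let y* satisfy ∇h(y*) = 0, fix y ∈ Y, write H := H(y), and let 0 < γ ≤ 1/L_{g,1}. Then for every v ∈ Y, setting v⁺ := v − γ(H(v) − ∇h(y)), one has ‖y − v⁺ − y*‖ ≤ (1 − μγ)‖y − v − y*‖ + (L_{g,2} γ/2)‖y − y*‖². -/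
open scoped RealInnerProductSpace
open Set

/-! Since `∇h(y*) = 0`, the new error splits as
`y - v⁺ - y* = (1 - γH)(y - v - y*) + γ (∇h(y*) - ∇h(y) - H(y* - y))`.
The quadratic form of `1 - γH` lies between `(1 - γL_{g,1})‖·‖² ≥ 0` and `(1 - μγ)‖·‖²`, so the
symmetric operator `1 - γH` has norm at most `1 - μγ`; the second term is a Taylor remainder of
`∇h`, bounded by `L_{g,2}/2 ‖y - y*‖²` because the Hessian is `L_{g,2}`-Lipschitz. -/

namespace ContinuousLinearMap

variable {E : Type*} [NormedAddCommGroup E] [InnerProductSpace ℝ E]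

theorem norm_le_of_isSymmetric_of_abs_inner_le (T : E →L[ℝ] E)
    (hT : (T : E →ₗ[ℝ] E).IsSymmetric) {c : ℝ} (hc : 0 ≤ c)
    (h : ∀ x, |⟪T x, x⟫| ≤ c * ‖x‖ ^ 2) : ‖T‖ ≤ c := by
  rw [T.norm_eq_iSup_rayleighQuotient hT]
  refine ciSup_le fun x => ?_
  rcases eq_or_ne x 0 with rfl | hx
  · simpa using hc
  rw [rayleighQuotient, reApplyInnerSelf_apply, abs_div, abs_sq,
    div_le_iff₀ (by positivity)]
  exact h x

theorem norm_id_sub_smul_le_of_isSymmetric (T : E →L[ℝ] E)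
    (hT : (T : E →ₗ[ℝ] E).IsSymmetric) {μ L γ : ℝ}
    (hlb : ∀ x, μ * ‖x‖ ^ 2 ≤ ⟪T x, x⟫) (hub : ∀ x, ⟪T x, x⟫ ≤ L * ‖x‖ ^ 2)
    (hμL : μ ≤ L) (hγ : 0 ≤ γ) (hγL : γ * L ≤ 1) :
    ‖ContinuousLinearMap.id ℝ E - γ • T‖ ≤ 1 - μ * γ := by
  have hsymm : ((ContinuousLinearMap.id ℝ E - γ • T : E →L[ℝ] E) : E →ₗ[ℝ] E).IsSymmetric := by
    rw [toLinearMap_sub, toLinearMap_smul, coe_id]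
    exact LinearMap.IsSymmetric.sub (fun _ _ => rfl) (hT.smul (conj_trivial γ))
  refine norm_le_of_isSymmetric_of_abs_inner_le _ hsymm (by nlinarith) fun x => ?_
  have hquad : ⟪(ContinuousLinearMap.id ℝ E - γ • T) x, x⟫ = ‖x‖ ^ 2 - γ * ⟪T x, x⟫ := by
    rw [sub_apply, smul_apply, id_apply, inner_sub_left, real_inner_smul_left,
      real_inner_self_eq_norm_sq]
  rw [hquad, abs_le]
  constructor <;> nlinarith [hlb x, hub x, sq_nonneg ‖x‖]

end ContinuousLinearMap

theorem norm_image_sub_sub_fderiv_le_of_lipschitz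
    {E F : Type*} [NormedAddCommGroup E] [NormedSpace ℝ E]
    [NormedAddCommGroup F] [NormedSpace ℝ F]
    {f : E → F} {f' : E → E →L[ℝ] F} {L : ℝ}
    (hf : ∀ x, HasFDerivAt f (f' x) x) (hLip : ∀ x x', ‖f' x - f' x'‖ ≤ L * ‖x - x'‖)
    (x z : E) :
    ‖f z - f x - f' x (z - x)‖ ≤ L / 2 * ‖z - x‖ ^ 2 := by
  set d := z - x
  -- compare `t ↦ f (x + t d) - f x - t f' x d` with `t ↦ L ‖d‖² t² / 2` on `[0, 1]`
  set φ : ℝ → F := fun t => f (x + t • d) - f x - t • f' x d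
  have hφ : ∀ t : ℝ, HasDerivAt φ (f' (x + t • d) d - f' x d) t := by
    intro t
    have hline : HasDerivAt (fun t : ℝ => x + t • d) d t := by
      simpa using ((hasDerivAt_id t).smul_const d).const_add x
    exact (((hf _).comp_hasDerivAt t hline).sub_const (f x)).sub
      (by simpa using (hasDerivAt_id t).smul_const (f' x d))
  have hB : ∀ t : ℝ, HasDerivAt (fun t => L * ‖d‖ ^ 2 * (t ^ 2 / 2)) (L * ‖d‖ ^ 2 * t) t := by
    intro t
    simpa using ((hasDerivAt_pow 2 t).div_const 2).const_mul (L * ‖d‖ ^ 2)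
  have hbound : ∀ t ∈ Ico (0 : ℝ) 1, ‖f' (x + t • d) d - f' x d‖ ≤ L * ‖d‖ ^ 2 * t := by
    intro t ht
    calc ‖f' (x + t • d) d - f' x d‖ = ‖(f' (x + t • d) - f' x) d‖ := rfl
      _ ≤ ‖f' (x + t • d) - f' x‖ * ‖d‖ := ContinuousLinearMap.le_opNorm _ d
      _ ≤ L * ‖t • d‖ * ‖d‖ := by
          gcongr
          simpa using hLip (x + t • d) x
      _ = L * ‖d‖ ^ 2 * t := by
          rw [norm_smul, Real.norm_eq_abs, abs_of_nonneg ht.1]; ring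
  have key := image_norm_le_of_norm_deriv_right_le_deriv_boundary
    (fun t _ => (hφ t).continuousAt.continuousWithinAt) (fun t _ => (hφ t).hasDerivWithinAt)
    (by simp [φ]) hB hbound (right_mem_Icc.2 zero_le_one)
  simp only [φ, one_smul] at key
  simpa [d, div_eq_mul_inv, mul_right_comm] using key

theorem stmt_7_general
    {Y : Type*} [NormedAddCommGroup Y] [InnerProductSpace ℝ Y]
    (gradh : Y → Y) (Hf : Y → Y →L[ℝ] Y)
    (μ Lg1 Lg2 γ : ℝ) (hμ : 0 < μ) (hμL : μ ≤ Lg1)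
    (hHess : ∀ y : Y, HasFDerivAt gradh (Hf y) y)
    (hsym : ∀ y v w : Y, ⟪Hf y v, w⟫ = ⟪v, Hf y w⟫)
    (hlb : ∀ y v : Y, μ * ‖v‖ ^ 2 ≤ ⟪Hf y v, v⟫)
    (hub : ∀ y v : Y, ⟪Hf y v, v⟫ ≤ Lg1 * ‖v‖ ^ 2)
    (hLip : ∀ y y' : Y, ‖Hf y - Hf y'‖ ≤ Lg2 * ‖y - y'‖)
    (ystar : Y) (hstar : gradh ystar = 0)
    (y : Y) (hγ : 0 < γ) (hγle : γ ≤ 1 / Lg1) :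
    ∀ v : Y,
      ‖y - (v - γ • (Hf y v - gradh y)) - ystar‖
        ≤ (1 - μ * γ) * ‖y - v - ystar‖ + Lg2 * γ / 2 * ‖y - ystar‖ ^ 2 := by
  intro v
  have hγL : γ * Lg1 ≤ 1 := by
    rwa [le_div_iff₀ (hμ.trans_le hμL)] at hγle
  set A := ContinuousLinearMap.id ℝ Y - γ • Hf y
  set r := gradh ystar - gradh y - Hf y (ystar - y)
  have hA : ‖A‖ ≤ 1 - μ * γ := (Hf y).norm_id_sub_smul_le_of_isSymmetric (hsym y)
    (hlb y) (hub y) hμL hγ.le hγL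
  have hr : ‖r‖ ≤ Lg2 / 2 * ‖y - ystar‖ ^ 2 := by
    simpa only [norm_sub_rev ystar y] using
      norm_image_sub_sub_fderiv_le_of_lipschitz hHess hLip y ystar
  have hdecomp : y - (v - γ • (Hf y v - gradh y)) - ystar = A (y - v - ystar) + γ • r := by
    simp only [A, r, hstar, sub_apply, smul_apply,
      ContinuousLinearMap.id_apply, map_sub]
    module
  calc ‖y - (v - γ • (Hf y v - gradh y)) - ystar‖
      ≤ ‖A (y - v - ystar)‖ + γ * ‖r‖ := by
        rw [hdecomp]
        refine (norm_add_le _ _).trans_eq ?_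
        rw [norm_smul, Real.norm_eq_abs, abs_of_pos hγ]
    _ ≤ (1 - μ * γ) * ‖y - v - ystar‖ + γ * (Lg2 / 2 * ‖y - ystar‖ ^ 2) := by
        gcongr
        exact A.le_of_opNorm_le hA _
    _ = (1 - μ * γ) * ‖y - v - ystar‖ + Lg2 * γ / 2 * ‖y - ystar‖ ^ 2 := by ring

/-- One-step contraction inequality (eq. 1eq in the proof of Lemma C.2) for the inner
gradient-descent iteration approximating the Newton direction. -/
theorem stmt_7
    {Y : Type*} [NormedAddCommGroup Y] [InnerProductSpace ℝ Y] [CompleteSpace Y]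
    (h : Y → ℝ) (gradh : Y → Y) (Hf : Y → Y →L[ℝ] Y)
    (μ Lg1 Lg2 γ : ℝ) (hμ : 0 < μ) (hμL : μ ≤ Lg1)
    (hgrad : ∀ y : Y, HasGradientAt h (gradh y) y)
    (hHess : ∀ y : Y, HasFDerivAt gradh (Hf y) y)
    (hsym : ∀ y v w : Y, ⟪Hf y v, w⟫ = ⟪v, Hf y w⟫)
    (hlb : ∀ y v : Y, μ * ‖v‖ ^ 2 ≤ ⟪Hf y v, v⟫)
    (hub : ∀ y v : Y, ⟪Hf y v, v⟫ ≤ Lg1 * ‖v‖ ^ 2)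
    (hLip : ∀ y y' : Y, ‖Hf y - Hf y'‖ ≤ Lg2 * ‖y - y'‖)
    (ystar : Y) (hstar : gradh ystar = 0)
    (y : Y) (hγ : 0 < γ) (hγle : γ ≤ 1 / Lg1) :
    ∀ v : Y,
      ‖y - (v - γ • (Hf y v - gradh y)) - ystar‖
        ≤ (1 - μ * γ) * ‖y - v - ystar‖ + Lg2 * γ / 2 * ‖y - ystar‖ ^ 2 :=
  stmt_7_general gradh Hf μ Lg1 Lg2 γ hμ hμL hHess hsym hlb hub hLip ystar hstar y hγ hγle
end

section
/- Let Y be a real Hilbert space, h : Y → ℝ differentiable with gradient ∇h, and H : Y → (Y →L[ℝ] Y) a Hessian field of h (for every y, ∇h has Fréchet derivative H(y) at y) such that each H(y) is self-adjoint, μ‖v‖² ≤ ⟨H(y)v, v⟩ ≤ L_{g,1}‖v‖² for all y, v (with 0 < μ ≤ L_{g,1}), and ‖H(y) − H(y')‖_op ≤ L_{g,2}‖y − y'‖. Let y* satisfy ∇h(y*) = 0, fix y ∈ Y, write H := H(y), and let 0 < γ ≤ 1/L_{g,1}. Define v₀ := γ∇h(y) and v_{t+1} := v_t − γ(H(v_t)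 − ∇h(y)) for t ≥ 0. Then for every natural number T: ‖y − v_T − y*‖ ≤ (1 − μγ)^T · √(1 − μγ) · ‖y − y*‖ + (L_{g,2}/(2μ)) ‖y − y*‖². -/
/-!
Write `A = 1 - γ H(y)` and `e = y - y*`. Unrolling the linear recursion gives
`v_T = γ (∑_{k ≤ T} A^k) ∇h(y)`, and since `γ H(y) = 1 - A` the geometric sum telescopes:
`e - v_T = A^{T+1} e + γ (∑_{k ≤ T} A^k) (H(y) e - ∇h(y))`.
The bounds `μ ≤ H(y) ≤ L_{g,1}` and `γ L_{g,1} ≤ 1` give `0 ≤ A ≤ 1 - μγ`, so `‖A‖ ≤ 1 - μγ` and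
`γ ∑_k ‖A‖^k ≤ 1/μ`. Because `∇h(y*) = 0`, the vector `H(y) e - ∇h(y)` is a second-order Taylor
remainder of `∇h` at `y`, of norm at most `L_{g,2}/2 ‖e‖²` by the Lipschitz bound on `H`.
-/

open scoped RealInnerProductSpace

open Finset

namespace ContinuousLinearMap

section Normed

variable {𝕜 E : Type*} [NontriviallyNormedField 𝕜] [NormedAddCommGroup E] [NormedSpace 𝕜 E]

theorem norm_pow_apply_le (A : E →L[𝕜] E) (k : ℕ) (v : E) : ‖(A ^ k) v‖ ≤ ‖A‖ ^ k * ‖v‖ := by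
  induction k with
  | zero => simp
  | succ k ih =>
    rw [pow_succ', mul_apply_eq_comp, pow_succ', mul_assoc]
    exact (A.le_opNorm _).trans (mul_le_mul_of_nonneg_left ih (norm_nonneg A))

theorem norm_geom_sum_apply_le (A : E →L[𝕜] E) {c : ℝ} (hA : ‖A‖ ≤ c) (n : ℕ) (w : E) :
    ‖(∑ k ∈ range n, A ^ k) w‖ ≤ (∑ k ∈ range n, c ^ k) * ‖w‖ := by
  rw [_root_.sum_apply, sum_mul]
  refine (norm_sum_le _ _).trans (sum_le_sum fun k _ ↦ ?_)
  exact (A.norm_pow_apply_le k w).trans (by gcongr)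

end Normed

section Inner

variable {𝕜 E : Type*} [RCLike 𝕜] [NormedAddCommGroup E] [InnerProductSpace 𝕜 E]

theorem opNorm_le_of_isSymmetric_of_abs_re_inner_le {T : E →L[𝕜] E}
    (hT : (T : E →ₗ[𝕜] E).IsSymmetric) {c : ℝ} (hc : 0 ≤ c)
    (h : ∀ x, |RCLike.re (inner 𝕜 (T x) x)| ≤ c * ‖x‖ ^ 2) : ‖T‖ ≤ c := by
  rw [T.norm_eq_iSup_rayleighQuotient hT]
  refine ciSup_le fun x ↦ ?_
  rcases eq_or_ne x 0 with rfl | hx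
  · simpa using hc
  · rw [rayleighQuotient, reApplyInnerSelf_apply, abs_div, abs_sq,
      div_le_iff₀ (by positivity)]
    exact h x

end Inner

end ContinuousLinearMap

theorem opNorm_one_sub_smul_le {E : Type*} [NormedAddCommGroup E] [InnerProductSpace ℝ E]
    {H : E →L[ℝ] E} (hH : (H : E →ₗ[ℝ] E).IsSymmetric) {μ L γ : ℝ}
    (hlb : ∀ v, μ * ‖v‖ ^ 2 ≤ ⟪H v, v⟫) (hub : ∀ v, ⟪H v, v⟫ ≤ L * ‖v‖ ^ 2)
    (hμL : μ ≤ L) (hγ : 0 ≤ γ) (hγL : γ * L ≤ 1) :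
    ‖1 - γ • H‖ ≤ 1 - μ * γ := by
  have hsymm : ((1 - γ • H : E →L[ℝ] E) : E →ₗ[ℝ] E).IsSymmetric :=
    LinearMap.IsSymmetric.one.sub (hH.smul (conj_trivial γ))
  refine ContinuousLinearMap.opNorm_le_of_isSymmetric_of_abs_re_inner_le hsymm
    (by nlinarith) fun v ↦ ?_
  have hquad : ⟪(1 - γ • H) v, v⟫ = ‖v‖ ^ 2 - γ * ⟪H v, v⟫ := by
    simp [inner_sub_left, real_inner_smul_left]
  rw [RCLike.re_to_real, hquad, abs_le]
  constructor <;> nlinarith [hlb v, hub v, sq_nonneg ‖v‖]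

theorem mul_geom_sum_one_sub_mul_le {μ γ : ℝ} (hμ : 0 < μ) (hγ : 0 < γ)
    (hc : 0 ≤ 1 - μ * γ) (n : ℕ) : γ * ∑ k ∈ range n, (1 - μ * γ) ^ k ≤ 1 / μ := by
  have hgeom := geom_sum_Ico_le_of_lt_one (m := 0) (n := n) hc (by nlinarith)
  rw [← range_eq_Ico, pow_zero, sub_sub_cancel] at hgeom
  calc γ * ∑ k ∈ range n, (1 - μ * γ) ^ k ≤ γ * (1 / (μ * γ)) := by gcongr
    _ = 1 / μ := by field_simp

theorem norm_smul_geom_sum_apply_le {E : Type*} [NormedAddCommGroup E] [NormedSpace ℝ E]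
    {A : E →L[ℝ] E} {μ γ : ℝ} (hμ : 0 < μ) (hγ : 0 < γ) (hA : ‖A‖ ≤ 1 - μ * γ) (n : ℕ)
    (w : E) : ‖γ • (∑ k ∈ range n, A ^ k) w‖ ≤ 1 / μ * ‖w‖ :=
  calc ‖γ • (∑ k ∈ range n, A ^ k) w‖ ≤ γ * ((∑ k ∈ range n, (1 - μ * γ) ^ k) * ‖w‖) := by
        rw [norm_smul, Real.norm_of_nonneg hγ.le]
        gcongr
        exact A.norm_geom_sum_apply_le hA n w
    _ ≤ 1 / μ * ‖w‖ := by
        rw [← mul_assoc]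
        gcongr
        exact mul_geom_sum_one_sub_mul_le hμ hγ ((norm_nonneg A).trans hA) n

theorem sub_gradientIterate_eq {R F : Type*} [CommRing R] [AddCommGroup F] [Module R F]
    [TopologicalSpace F] [IsTopologicalAddGroup F] [ContinuousConstSMul R F]
    (H : F →L[R] F) (γ : R) (g : F) (v : ℕ → F)
    (hv0 : v 0 = γ • g) (hvrec : ∀ t, v (t + 1) = v t - γ • (H (v t) - g)) (e : F) (T : ℕ) :
    e - v T = ((1 - γ • H) ^ (T + 1)) e
      + γ • (∑ k ∈ range (T + 1), (1 - γ • H) ^ k) (H e - g) := by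
  open ContinuousLinearMap in
  set A := 1 - γ • H
  have hA : ∀ x, A x = x - γ • H x := fun x ↦ rfl
  have hv : v T = γ • (∑ k ∈ range (T + 1), A ^ k) g := by
    induction T with
    | zero => simp [hv0]
    | succ T ih =>
      rw [hvrec, geom_sum_succ, add_apply, mul_apply_eq_comp, one_apply_eq_self, smul_add,
        ← map_smul, ← ih, hA, smul_sub]
      abel
  have htelescope : γ • (∑ k ∈ range (T + 1), A ^ k) (H e) = e - (A ^ (T + 1)) e := by
    have hγH : γ • H = 1 - A := by simp [A]
    rw [← map_smul, ← smul_apply, hγH, ← mul_apply_eq_comp, geom_sum_mul_neg, sub_apply,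
      one_apply_eq_self]
  rw [hv, map_sub, smul_sub, htelescope]
  abel

theorem norm_fderiv_apply_sub_image_sub_le {E F : Type*} [NormedAddCommGroup E]
    [NormedSpace ℝ E] [NormedAddCommGroup F] [NormedSpace ℝ F] {f : E → F} {f' : E → E →L[ℝ] F}
    {L : ℝ} (hf : ∀ x, HasFDerivAt f (f' x) x) (hLip : ∀ x y, ‖f' x - f' y‖ ≤ L * ‖x - y‖)
    (a b : E) : ‖f' b (b - a) - (f b - f a)‖ ≤ L / 2 * ‖b - a‖ ^ 2 := by
  set d := a - b
  -- `φ 1` is the remainder and `‖φ' s‖ ≤ L ‖d‖² s`; comparing with `L ‖d‖² s² / 2` gives the `1/2`.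
  let φ : ℝ → F := fun s ↦ f (b + s • d) - f b - s • f' b d
  have hφ : ∀ s, HasDerivAt φ (f' (b + s • d) d - f' b d) s := fun s ↦ by
    have hline : HasDerivAt (fun s : ℝ ↦ b + s • d) d s := by
      simpa using ((hasDerivAt_id s).smul_const d).const_add b
    exact (((hf _).comp_hasDerivAt s hline).sub_const (f b)).sub
      (by simpa using (hasDerivAt_id s).smul_const (f' b d))
  have hB : ∀ s, HasDerivAt (fun s ↦ L * ‖d‖ ^ 2 / 2 * s ^ 2) (L * ‖d‖ ^ 2 * s) s := fun s ↦
    ((hasDerivAt_pow 2 s).const_mul _).congr_deriv (by ring)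
  have hbound : ∀ s ∈ Set.Ico (0 : ℝ) 1, ‖f' (b + s • d) d - f' b d‖ ≤ L * ‖d‖ ^ 2 * s := by
    intro s hs
    calc ‖f' (b + s • d) d - f' b d‖ = ‖(f' (b + s • d) - f' b) d‖ := rfl
      _ ≤ L * ‖b + s • d - b‖ * ‖d‖ :=
        ((f' _ - f' b).le_opNorm d).trans (by gcongr; exact hLip _ _)
      _ = L * ‖d‖ ^ 2 * s := by
        rw [add_sub_cancel_left, norm_smul, Real.norm_of_nonneg hs.1]; ring
  have key := image_norm_le_of_norm_deriv_right_le_deriv_boundary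
    (fun s _ ↦ (hφ s).continuousAt.continuousWithinAt) (fun s _ ↦ (hφ s).hasDerivWithinAt)
    (by simp [φ]) hB hbound (Set.right_mem_Icc.2 zero_le_one)
  have hφ1 : φ 1 = f' b (b - a) - (f b - f a) := by
    simp only [φ, d, one_smul, add_sub_cancel]
    rw [← neg_sub b a, map_neg]
    abel
  rw [hφ1, show ‖d‖ = ‖b - a‖ from norm_sub_rev a b] at key
  linarith

theorem stmt_8_general
    {Y : Type*} [NormedAddCommGroup Y] [InnerProductSpace ℝ Y]
    (gradh : Y → Y) (Hf : Y → Y →L[ℝ] Y)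
    (μ Lg1 Lg2 γ : ℝ) (hμ : 0 < μ) (hμL : μ ≤ Lg1)
    (hHess : ∀ y : Y, HasFDerivAt gradh (Hf y) y)
    (hsym : ∀ y v w : Y, ⟪Hf y v, w⟫ = ⟪v, Hf y w⟫)
    (hlb : ∀ y v : Y, μ * ‖v‖ ^ 2 ≤ ⟪Hf y v, v⟫)
    (hub : ∀ y v : Y, ⟪Hf y v, v⟫ ≤ Lg1 * ‖v‖ ^ 2)
    (hLip : ∀ y y' : Y, ‖Hf y - Hf y'‖ ≤ Lg2 * ‖y - y'‖)
    (ystar : Y) (hstar : gradh ystar = 0)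
    (y : Y) (hγ : 0 < γ) (hγle : γ ≤ 1 / Lg1)
    (v : ℕ → Y)
    (hv0 : v 0 = γ • gradh y)
    (hvrec : ∀ t : ℕ, v (t + 1) = v t - γ • (Hf y (v t) - gradh y)) :
    ∀ T : ℕ,
      ‖y - v T - ystar‖
        ≤ (1 - μ * γ) ^ T * Real.sqrt (1 - μ * γ) * ‖y - ystar‖
          + Lg2 / (2 * μ) * ‖y - ystar‖ ^ 2 := by
  intro T
  set e := y - ystar
  set A := 1 - γ • Hf y
  set c := 1 - μ * γ
  have hA : ‖A‖ ≤ c := opNorm_one_sub_smul_le (hsym y) (hlb y) (hub y) hμL hγ.le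
    ((le_div_iff₀ (hμ.trans_le hμL)).1 hγle)
  have hc0 : 0 ≤ c := (norm_nonneg A).trans hA
  have hc1 : c ≤ 1 := by nlinarith
  have htaylor : ‖Hf y e - gradh y‖ ≤ Lg2 / 2 * ‖e‖ ^ 2 := by
    have h := norm_fderiv_apply_sub_image_sub_le hHess hLip ystar y
    rwa [hstar, sub_zero] at h
  have hcontract : ‖(A ^ (T + 1)) e‖ ≤ c ^ T * √c * ‖e‖ :=
    calc ‖(A ^ (T + 1)) e‖ ≤ ‖A‖ ^ (T + 1) * ‖e‖ := A.norm_pow_apply_le _ e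
      _ ≤ c ^ T * c * ‖e‖ := by rw [pow_succ]; gcongr
      _ ≤ c ^ T * √c * ‖e‖ := by gcongr; exact Real.le_sqrt_self_iff.2 hc1
  have hresidual : ‖γ • (∑ k ∈ range (T + 1), A ^ k) (Hf y e - gradh y)‖
      ≤ Lg2 / (2 * μ) * ‖e‖ ^ 2 :=
    calc _ ≤ 1 / μ * ‖Hf y e - gradh y‖ := norm_smul_geom_sum_apply_le hμ hγ hA _ _
      _ ≤ 1 / μ * (Lg2 / 2 * ‖e‖ ^ 2) := by gcongr
      _ = Lg2 / (2 * μ) * ‖e‖ ^ 2 := by field_simp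
  calc ‖y - v T - ystar‖ = ‖e - v T‖ := by rw [sub_right_comm]
    _ ≤ ‖(A ^ (T + 1)) e‖ + ‖γ • (∑ k ∈ range (T + 1), A ^ k) (Hf y e - gradh y)‖ := by
        rw [sub_gradientIterate_eq (Hf y) γ (gradh y) v hv0 hvrec e T]
        exact norm_add_le _ _
    _ ≤ c ^ T * √c * ‖e‖ + Lg2 / (2 * μ) * ‖e‖ ^ 2 := add_le_add hcontract hresidual

/-- Eq. (9eq) in the proof of Lemma C.2: the inner gradient-descent loop of NBO-GD,
initialized at `v₋₁ = 0` (so `v₀ = γ∇h(y)`), brings `y − v_T` within a contracted distance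
of the lower-level solution `y*`, up to a quadratic Newton-type remainder. -/
theorem stmt_8
    {Y : Type*} [NormedAddCommGroup Y] [InnerProductSpace ℝ Y] [CompleteSpace Y]
    (h : Y → ℝ) (gradh : Y → Y) (Hf : Y → Y →L[ℝ] Y)
    (μ Lg1 Lg2 γ : ℝ) (hμ : 0 < μ) (hμL : μ ≤ Lg1)
    (hgrad : ∀ y : Y, HasGradientAt h (gradh y) y)
    (hHess : ∀ y : Y, HasFDerivAt gradh (Hf y) y)
    (hsym : ∀ y v w : Y, ⟪Hf y v, w⟫ = ⟪v, Hf y w⟫)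
    (hlb : ∀ y v : Y, μ * ‖v‖ ^ 2 ≤ ⟪Hf y v, v⟫)
    (hub : ∀ y v : Y, ⟪Hf y v, v⟫ ≤ Lg1 * ‖v‖ ^ 2)
    (hLip : ∀ y y' : Y, ‖Hf y - Hf y'‖ ≤ Lg2 * ‖y - y'‖)
    (ystar : Y) (hstar : gradh ystar = 0)
    (y : Y) (hγ : 0 < γ) (hγle : γ ≤ 1 / Lg1)
    (v : ℕ → Y)
    (hv0 : v 0 = γ • gradh y)
    (hvrec : ∀ t : ℕ, v (t + 1) = v t - γ • (Hf y (v t) - gradh y)) :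
    ∀ T : ℕ,
      ‖y - v T - ystar‖
        ≤ (1 - μ * γ) ^ T * Real.sqrt (1 - μ * γ) * ‖y - ystar‖
          + Lg2 / (2 * μ) * ‖y - ystar‖ ^ 2 :=
  stmt_8_general gradh Hf μ Lg1 Lg2 γ hμ hμL hHess hsym hlb hub hLip ystar hstar y hγ hγle v hv0
    hvrec
end

section
/- Let Y be a real Hilbert space and H : Y →L[ℝ] Y self-adjoint with μ‖v‖² ≤ ⟨Hv, v⟩ ≤ L_{g,1}‖v‖² for all v (0 < μ ≤ L_{g,1}). Let 0 < γ ≤ 1/L_{g,1} and let T be a natural number with (1 − μγ)^{T+1} ≤ 1/4. Let u, c ∈ Y and let û ∈ Y satisfy H(û) = c. Define w₀ := γ(H(u) − c) and w_{t+1} := w_t − γ(H(w_t) − (H(u) − c)) for t ≥ 0, and set u⁺ := u − w_T. Suppose u*, u*' ∈ Y and constants L₁, L_u, a, s ≥ 0 satisfy ‖û − u*‖ ≤ (L₁/μ) a and ‖u* − u*'‖ ≤ (L_u/μ) s. Then ‖u⁺ − u*'‖ ≤ (1/4)‖u − u*‖ + (5 L₁/(4μ)) a + (L_u/μ) s. 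-/
open scoped RealInnerProductSpace

set_option maxHeartbeats 1000000 in
/-- Second inequality (eq. u-descent-f) of Lemma C.2 of the paper, for the inner
gradient-descent loop approximating the Hessian-inverse-vector product. -/
theorem stmt_10
    {Y : Type*} [NormedAddCommGroup Y] [InnerProductSpace ℝ Y] [CompleteSpace Y]
    (H : Y →L[ℝ] Y) (μ Lg1 γ : ℝ) (hμ : 0 < μ) (hμL : μ ≤ Lg1)
    (hsym : ∀ v w : Y, ⟪H v, w⟫ = ⟪v, H w⟫)
    (hlb : ∀ v : Y, μ * ‖v‖ ^ 2 ≤ ⟪H v, v⟫)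
    (hub : ∀ v : Y, ⟪H v, v⟫ ≤ Lg1 * ‖v‖ ^ 2)
    (hγ : 0 < γ) (hγle : γ ≤ 1 / Lg1)
    (T : ℕ) (hT : (1 - μ * γ) ^ (T + 1) ≤ 1 / 4)
    (u c uhat : Y) (huhat : H uhat = c)
    (w : ℕ → Y)
    (hw0 : w 0 = γ • (H u - c))
    (hwrec : ∀ t : ℕ, w (t + 1) = w t - γ • (H (w t) - (H u - c)))
    (ustar ustar' : Y) (L1 Lu a s : ℝ)
    (hL1 : 0 ≤ L1) (hLu : 0 ≤ Lu) (ha : 0 ≤ a) (hs : 0 ≤ s)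
    (hclose1 : ‖uhat - ustar‖ ≤ L1 / μ * a)
    (hclose2 : ‖ustar - ustar'‖ ≤ Lu / μ * s) :
    ‖(u - w T) - ustar'‖ ≤ 1 / 4 * ‖u - ustar‖ + 5 * L1 / (4 * μ) * a + Lu / μ * s := by
  classical
  have hLg1 : 0 < Lg1 := lt_of_lt_of_le hμ hμL
  set β : ℝ := 1 - μ * γ with hβ
  have hγL : γ * Lg1 ≤ 1 := by
    rw [le_div_iff₀ hLg1] at hγle; linarith
  have hβ0 : 0 ≤ β := by nlinarith
  set B : Y →L[ℝ] Y := ContinuousLinearMap.id ℝ Y - γ • H with hBdef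
  have hBapp : ∀ v : Y, B v = v - γ • H v := fun v => rfl
  have hBsym : ∀ x y : Y, ⟪B x, y⟫ = ⟪x, B y⟫ := by
    intro x y
    simp only [hBapp, inner_sub_left, inner_sub_right, inner_smul_left, inner_smul_right,
      RCLike.conj_to_real, hsym]
  have hBpos : ∀ v : Y, 0 ≤ ⟪B v, v⟫ := by
    intro v
    have := hub v
    have hv : ⟪B v, v⟫ = ‖v‖ ^ 2 - γ * ⟪H v, v⟫ := by
      simp [hBapp, inner_sub_left, inner_smul_left, real_inner_self_eq_norm_sq]
    rw [hv]
    nlinarith [sq_nonneg ‖v‖]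
  have hBub : ∀ v : Y, ⟪B v, v⟫ ≤ β * ‖v‖ ^ 2 := by
    intro v
    have := hlb v
    have hv : ⟪B v, v⟫ = ‖v‖ ^ 2 - γ * ⟪H v, v⟫ := by
      simp [hBapp, inner_sub_left, inner_smul_left, real_inner_self_eq_norm_sq]
    rw [hv, hβ]
    nlinarith
  have cs : ∀ x y : Y, ⟪B x, y⟫ ^ 2 ≤ ⟪B x, x⟫ * ⟪B y, y⟫ := by
    intro x y
    have hquad : ∀ t : ℝ, 0 ≤ ⟪B y, y⟫ * (t * t) + (2 * ⟪B x, y⟫) * t + ⟪B x, x⟫ := by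
      intro t
      have h0 := hBpos (x + t • y)
      have hexp : ⟪B (x + t • y), x + t • y⟫
          = ⟪B y, y⟫ * (t * t) + (2 * ⟪B x, y⟫) * t + ⟪B x, x⟫ := by
        have hc : ⟪B y, x⟫ = ⟪B x, y⟫ := by
          rw [hBsym y x, real_inner_comm]
        simp only [map_add, map_smul, inner_add_left, inner_add_right, inner_smul_left,
          inner_smul_right, RCLike.conj_to_real, hc]
        ring
      rw [hexp] at h0; linarith
    have hd := discrim_le_zero (a := ⟪B y, y⟫) (b := 2 * ⟪B x, y⟫) (c := ⟪B x, x⟫) hquad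
    rw [discrim] at hd
    nlinarith [hd]
  have hnorm : ∀ v : Y, ‖B v‖ ≤ β * ‖v‖ := by
    intro v
    by_cases h0 : ‖B v‖ = 0
    · rw [h0]; positivity
    · have hpos : 0 < ‖B v‖ := lt_of_le_of_ne (norm_nonneg _) (Ne.symm h0)
      have h1 : ⟪B v, B v⟫ = ‖B v‖ ^ 2 := real_inner_self_eq_norm_sq _
      have h2 := cs v (B v)
      rw [h1] at h2
      have h3 := hBub v
      have h4 := hBub (B v)
      have h5 := hBpos v
      have h6 := hBpos (B v)
      have hsq : ‖B v‖ ^ 2 ≤ (β * ‖v‖) ^ 2 := by nlinarith [sq_nonneg ‖B v‖]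
      nlinarith [norm_nonneg v, mul_nonneg hβ0 (norm_nonneg v)]
  -- the error recursion
  have key : ∀ t : ℕ, ‖(u - w t) - uhat‖ ≤ β ^ (t + 1) * ‖u - uhat‖ := by
    intro t
    induction t with
    | zero =>
      have he : (u - w 0) - uhat = B (u - uhat) := by
        rw [hw0, hBapp, map_sub, huhat]
        abel
      rw [he, pow_one]
      exact hnorm _
    | succ n ih =>
      have he : (u - w (n + 1)) - uhat = B ((u - w n) - uhat) := by
        rw [hwrec n, hBapp, map_sub, map_sub, huhat]
        simp only [smul_sub]
        abel
      rw [he]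
      calc ‖B ((u - w n) - uhat)‖ ≤ β * ‖(u - w n) - uhat‖ := hnorm _
        _ ≤ β * (β ^ (n + 1) * ‖u - uhat‖) := by
            exact mul_le_mul_of_nonneg_left ih hβ0
        _ = β ^ (n + 1 + 1) * ‖u - uhat‖ := by ring
  have hμne : (μ : ℝ) ≠ 0 := ne_of_gt hμ
  have hL1a : 0 ≤ L1 / μ * a := by positivity
  have h2 : ‖(u - w T) - uhat‖ ≤ 1 / 4 * ‖u - uhat‖ := by
    have hk := key T
    have hβT : β ^ (T + 1) ≤ 1 / 4 := hT
    have h5 : β ^ (T + 1) * ‖u - uhat‖ ≤ 1 / 4 * ‖u - uhat‖ :=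
      mul_le_mul_of_nonneg_right hβT (norm_nonneg _)
    linarith
  have h3 : ‖u - uhat‖ ≤ ‖u - ustar‖ + ‖uhat - ustar‖ := by
    calc ‖u - uhat‖ ≤ ‖u - ustar‖ + ‖ustar - uhat‖ := norm_sub_le_norm_sub_add_norm_sub u ustar uhat
      _ = ‖u - ustar‖ + ‖uhat - ustar‖ := by rw [norm_sub_rev ustar uhat]
  have h1 : ‖(u - w T) - ustar'‖ ≤ ‖(u - w T) - uhat‖ + ‖uhat - ustar‖ + ‖ustar - ustar'‖ := by
    calc ‖(u - w T) - ustar'‖ ≤ ‖(u - w T) - ustar‖ + ‖ustar - ustar'‖ :=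
          norm_sub_le_norm_sub_add_norm_sub _ _ _
      _ ≤ (‖(u - w T) - uhat‖ + ‖uhat - ustar‖) + ‖ustar - ustar'‖ := by
          linarith [norm_sub_le_norm_sub_add_norm_sub (u - w T) uhat ustar]
  have hid : 5 * L1 / (4 * μ) * a = L1 / μ * a + 1 / 4 * (L1 / μ * a) := by
    field_simp; ring
  linarith
end

section
/- Let μ, L_{g,1}, L_{g,2}, L₁, L₂, L_u be positive real numbers and α > 0 with α ≤ min{ μ²/(8 L_{g,1} L₂ L_{g,2}), μ²/(20 L_{g,1}² L₁), 5 μ L₁/(8 L_u L₂ L_{g,2}), μ/(4 L_{g,1} L_u) }. Let a, b, a⁺, b⁺, s be nonnegative reals satisfying s ≤ α (L₂ + L_{g,1} b), a⁺ ≤ (L_{g,2}/(2μ)) a² + (L_{g,1}/μ) s + a/4, and b⁺ ≤ b/4 + (5 L₁/(4μ)) a + (L_u/μ) s. If a ≤ μ/(2 L_{g,2}) and b ≤ 5 L₁/(2 L_{g,2}), then a⁺ ≤ μ/(2 L_{g,2}), b⁺ ≤ 5 L₁/(2 L_{g,2}), and moreover a⁺ ≤ a/2 + (L_{g,1}/μ)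 s. -/
set_option maxHeartbeats 1600000


/-- Inductive step of Lemma C.3 of the paper, in real-number form: the tracking errors of
the NBO-GD iterates stay in their neighborhoods, and the `y`-error contracts. -/
theorem stmt_11
    (μ Lg1 Lg2 L1 L2 Lu α a b a' b' s : ℝ)
    (hμ : 0 < μ) (hLg1 : 0 < Lg1) (hLg2 : 0 < Lg2)
    (hL1 : 0 < L1) (hL2 : 0 < L2) (hLu : 0 < Lu)
    (hα : 0 < α)
    (hαle : α ≤ min (min (μ ^ 2 / (8 * Lg1 * L2 * Lg2)) (μ ^ 2 / (20 * Lg1 ^ 2 * L1)))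
      (min (5 * μ * L1 / (8 * Lu * L2 * Lg2)) (μ / (4 * Lg1 * Lu))))
    (ha : 0 ≤ a) (hb : 0 ≤ b) (ha' : 0 ≤ a') (hb' : 0 ≤ b') (hs : 0 ≤ s)
    (hsle : s ≤ α * (L2 + Lg1 * b))
    (ha'le : a' ≤ Lg2 / (2 * μ) * a ^ 2 + Lg1 / μ * s + a / 4)
    (hb'le : b' ≤ b / 4 + 5 * L1 / (4 * μ) * a + Lu / μ * s)
    (haB : a ≤ μ / (2 * Lg2)) (hbB : b ≤ 5 * L1 / (2 * Lg2)) :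
    a' ≤ μ / (2 * Lg2) ∧ b' ≤ 5 * L1 / (2 * Lg2) ∧ a' ≤ a / 2 + Lg1 / μ * s := by
  have h1 := (le_min_iff.1 (le_min_iff.1 hαle).1)
  have h2 := (le_min_iff.1 (le_min_iff.1 hαle).2)
  obtain ⟨hα1, hα2⟩ := h1
  obtain ⟨hα3, hα4⟩ := h2
  rw [le_div_iff₀ (by positivity)] at hα1 hα2 hα3 hα4
  rw [le_div_iff₀ (by positivity)] at haB hbB
  -- square bound: Lg2 * a^2 ≤ a * μ / 2
  have hsq : Lg2 / (2 * μ) * a ^ 2 ≤ a / 4 := by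
    rw [div_mul_eq_mul_div, div_le_div_iff₀ (by positivity) (by norm_num)]
    nlinarith [mul_le_mul_of_nonneg_left haB ha]
  have h3 : a' ≤ a / 2 + Lg1 / μ * s := by linarith
  refine ⟨?_, ?_, h3⟩
  · -- a' ≤ μ/(2 Lg2)
    rw [le_div_iff₀ (by positivity)]
    have hs' : Lg1 / μ * s ≤ Lg1 / μ * (α * (L2 + Lg1 * b)) := by
      apply mul_le_mul_of_nonneg_left hsle (by positivity)
    have key : Lg1 / μ * (α * (L2 + Lg1 * b)) * (2 * Lg2) ≤ μ / 2 := by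
      rw [div_mul_eq_mul_div, div_mul_eq_mul_div, div_le_div_iff₀ hμ (by norm_num)]
      nlinarith [mul_le_mul_of_nonneg_left hbB (le_of_lt (mul_pos hα (by positivity : (0:ℝ) < Lg1^2))), mul_pos hα hLg1, mul_nonneg hα.le hb]
    nlinarith [mul_le_mul_of_nonneg_right hs' (by positivity : (0:ℝ) ≤ 2 * Lg2)]
  · rw [le_div_iff₀ (by positivity)]
    have hs' : Lu / μ * s ≤ Lu / μ * (α * (L2 + Lg1 * b)) := by
      apply mul_le_mul_of_nonneg_left hsle (by positivity)
    have key : Lu / μ * (α * (L2 + Lg1 * b)) * (2 * Lg2) ≤ 5 * L1 / 4 + b * Lg2 / 2 := by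
      rw [div_mul_eq_mul_div, div_mul_eq_mul_div, div_le_iff₀ hμ]
      nlinarith [mul_le_mul_of_nonneg_right hα4 (mul_nonneg hb hLg2.le), mul_nonneg hα.le hb]
    have hsk : Lu / μ * s * (2 * Lg2) ≤ 5 * L1 / 4 + b * Lg2 / 2 :=
      le_trans (mul_le_mul_of_nonneg_right hs' (by positivity)) key
    have hterm : 5 * L1 / (4 * μ) * a * (2 * Lg2) ≤ 5 * L1 / 4 := by
      rw [div_mul_eq_mul_div, div_mul_eq_mul_div, div_le_div_iff₀ (by positivity) (by norm_num)]
      nlinarith [mul_le_mul_of_nonneg_left haB (by positivity : (0:ℝ) ≤ 5 * L1)]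
    have e1 : b' * (2 * Lg2) ≤ (b / 4) * (2 * Lg2) + 5 * L1 / (4 * μ) * a * (2 * Lg2) + Lu / μ * s * (2 * Lg2) := by
      have := mul_le_mul_of_nonneg_right hb'le (by positivity : (0:ℝ) ≤ 2 * Lg2)
      linarith [this, (by ring : (b / 4 + 5 * L1 / (4 * μ) * a + Lu / μ * s) * (2 * Lg2) = (b / 4) * (2 * Lg2) + 5 * L1 / (4 * μ) * a * (2 * Lg2) + Lu / μ * s * (2 * Lg2))]
    nlinarith [e1, hsk, hterm, hbB, hLg2.le]
end

section
/- Let μ, L₁, L_{g,1}, L_u, L_Φ be positive real numbers with μ ≤ L_{g,1}, and let α > 0 with α ≤ min{ 1/(4L_Φ), L₁/(4L_u²), μ²/(64 L₁ L_{g,1}²) }. Set b_y := 4L₁ and b_u := μ²/(8L₁). Let p, p⁺ be real numbers and a, a⁺, b, b⁺, G, D nonnegative real numbers satisfying: p⁺ ≤ p − (α/2)G² − (α/2 − L_Φα²/2)D² + L₁²α a² + L_{g,1}²α b²; (a⁺)² ≤ a²/2 + (2L_{g,1}²α²/μ²)D²; (b⁺)² ≤ b²/8 + (8L₁²/μ²)a²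 + (4L_u²α²/μ²)D². Then, defining V := p + b_y a² + b_u b² and V⁺ := p⁺ + b_y (a⁺)² + b_u (b⁺)², one has V⁺ − V ≤ −(α/2)G² − (α/8)D² − (b_y/8)a² − (7b_u/16)b². -/
/-!
Substituting the three descent inequalities into `V⁺ - V`, with arbitrary nonnegative weights in
place of `b_y, b_u`, leaves a combination of `G², D², a², b²`. With `b_y = 4L₁`, `b_u = μ²/(8L₁)`
the cross term `b_u · (8L₁²/μ²) a²` is exactly `L₁ a²`, and each of the three restrictions on `α`
bounds one of the three positive contributions to the `D²` coefficient by `α/8`.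
-/

theorem lyapunov_sub_le_of_recursions {μ L1 Lg1 Lu LΦ α p p' a a' b b' G D wy wu : ℝ}
    (hwy : 0 ≤ wy) (hwu : 0 ≤ wu)
    (hp : p' ≤ p - α / 2 * G ^ 2 - (α / 2 - LΦ * α ^ 2 / 2) * D ^ 2
      + L1 ^ 2 * α * a ^ 2 + Lg1 ^ 2 * α * b ^ 2)
    (haRec : a' ^ 2 ≤ a ^ 2 / 2 + 2 * Lg1 ^ 2 * α ^ 2 / μ ^ 2 * D ^ 2)
    (hbRec : b' ^ 2 ≤ b ^ 2 / 8 + 8 * L1 ^ 2 / μ ^ 2 * a ^ 2 + 4 * Lu ^ 2 * α ^ 2 / μ ^ 2 * D ^ 2) :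
    (p' + wy * a' ^ 2 + wu * b' ^ 2) - (p + wy * a ^ 2 + wu * b ^ 2)
      ≤ -(α / 2) * G ^ 2
        - (α / 2 - LΦ * α ^ 2 / 2 - wy * (2 * Lg1 ^ 2 * α ^ 2 / μ ^ 2)
            - wu * (4 * Lu ^ 2 * α ^ 2 / μ ^ 2)) * D ^ 2
        - (wy / 2 - L1 ^ 2 * α - wu * (8 * L1 ^ 2 / μ ^ 2)) * a ^ 2
        - (7 * wu / 8 - Lg1 ^ 2 * α) * b ^ 2 := by
  linarith [mul_le_mul_of_nonneg_left haRec hwy, mul_le_mul_of_nonneg_left hbRec hwu]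

theorem lyapunov_coeff_dir_bound {μ L1 Lg1 Lu LΦ α : ℝ} (hμ : μ ≠ 0) (hL1 : 0 < L1)
    (hα : 0 ≤ α) (hΦ : α * (4 * LΦ) ≤ 1) (hu : α * (4 * Lu ^ 2) ≤ L1)
    (hg : α * (64 * L1 * Lg1 ^ 2) ≤ μ ^ 2) :
    α / 8 ≤ α / 2 - LΦ * α ^ 2 / 2 - 4 * L1 * (2 * Lg1 ^ 2 * α ^ 2 / μ ^ 2)
      - μ ^ 2 / (8 * L1) * (4 * Lu ^ 2 * α ^ 2 / μ ^ 2) := by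
  have hΦ' : LΦ * α ^ 2 / 2 ≤ α / 8 := by nlinarith
  have hg' : 4 * L1 * (2 * Lg1 ^ 2 * α ^ 2 / μ ^ 2) ≤ α / 8 := by
    rw [show 4 * L1 * (2 * Lg1 ^ 2 * α ^ 2 / μ ^ 2) = α * (α * (64 * L1 * Lg1 ^ 2)) / (8 * μ ^ 2)
      by ring, div_le_iff₀ (by positivity)]
    nlinarith
  have hu' : μ ^ 2 / (8 * L1) * (4 * Lu ^ 2 * α ^ 2 / μ ^ 2) ≤ α / 8 := by
    rw [show μ ^ 2 / (8 * L1) * (4 * Lu ^ 2 * α ^ 2 / μ ^ 2) = α * (α * (4 * Lu ^ 2)) / (8 * L1)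
      by field_simp, div_le_iff₀ (by positivity)]
    nlinarith
  linarith

theorem lyapunov_coeff_y_bound {μ L1 Lg1 α : ℝ} (hμ : 0 < μ) (hL1 : 0 < L1) (hμLg1 : μ ≤ Lg1)
    (hg : α * (64 * L1 * Lg1 ^ 2) ≤ μ ^ 2) :
    4 * L1 / 8 ≤ 4 * L1 / 2 - L1 ^ 2 * α - μ ^ 2 / (8 * L1) * (8 * L1 ^ 2 / μ ^ 2) := by
  have hcross : μ ^ 2 / (8 * L1) * (8 * L1 ^ 2 / μ ^ 2) = L1 := by field_simp
  have hLα : α * (64 * L1) ≤ 1 := by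
    have hLg1 : 0 < Lg1 ^ 2 := pow_pos (hμ.trans_le hμLg1) 2
    nlinarith [pow_le_pow_left₀ hμ.le hμLg1 2]
  nlinarith

theorem lyapunov_coeff_u_bound {μ L1 Lg1 α : ℝ} (hL1 : 0 < L1)
    (hg : α * (64 * L1 * Lg1 ^ 2) ≤ μ ^ 2) :
    7 * (μ ^ 2 / (8 * L1)) / 16 ≤ 7 * (μ ^ 2 / (8 * L1)) / 8 - Lg1 ^ 2 * α := by
  have : Lg1 ^ 2 * α ≤ μ ^ 2 / (64 * L1) := by
    rw [le_div_iff₀ (by positivity)]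
    linarith
  have : 0 ≤ μ ^ 2 / (64 * L1) := by positivity
  linarith [show μ ^ 2 / (8 * L1) = 8 * (μ ^ 2 / (64 * L1)) by ring]

theorem stmt_16_general
    (μ L1 Lg1 Lu LΦ α : ℝ)
    (hμ : 0 < μ) (hL1 : 0 < L1) (hLΦ : 0 < LΦ)
    (hμLg1 : μ ≤ Lg1)
    (hα : 0 < α)
    (hαle : α ≤ min (min (1 / (4 * LΦ)) (L1 / (4 * Lu ^ 2))) (μ ^ 2 / (64 * L1 * Lg1 ^ 2)))
    (p p' : ℝ) (a a' b b' G D : ℝ)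
    (hp : p' ≤ p - α / 2 * G ^ 2 - (α / 2 - LΦ * α ^ 2 / 2) * D ^ 2
      + L1 ^ 2 * α * a ^ 2 + Lg1 ^ 2 * α * b ^ 2)
    (haRec : a' ^ 2 ≤ a ^ 2 / 2 + 2 * Lg1 ^ 2 * α ^ 2 / μ ^ 2 * D ^ 2)
    (hbRec : b' ^ 2 ≤ b ^ 2 / 8 + 8 * L1 ^ 2 / μ ^ 2 * a ^ 2 + 4 * Lu ^ 2 * α ^ 2 / μ ^ 2 * D ^ 2) :
    (p' + 4 * L1 * a' ^ 2 + μ ^ 2 / (8 * L1) * b' ^ 2)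
      - (p + 4 * L1 * a ^ 2 + μ ^ 2 / (8 * L1) * b ^ 2)
      ≤ -(α / 2) * G ^ 2 - α / 8 * D ^ 2 - 4 * L1 / 8 * a ^ 2
        - 7 * (μ ^ 2 / (8 * L1)) / 16 * b ^ 2 := by
  obtain ⟨⟨hαΦ, hαu⟩, hαg⟩ := by simpa only [le_min_iff] using hαle
  have hΦ : α * (4 * LΦ) ≤ 1 := mul_le_of_le_div₀ zero_le_one (by positivity) hαΦ
  have hu : α * (4 * Lu ^ 2) ≤ L1 := mul_le_of_le_div₀ hL1.le (by positivity) hαu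
  have hg : α * (64 * L1 * Lg1 ^ 2) ≤ μ ^ 2 :=
    mul_le_of_le_div₀ (by positivity) (by positivity) hαg
  calc _ ≤ _ := lyapunov_sub_le_of_recursions (by positivity) (by positivity) hp haRec hbRec
    _ ≤ _ := by
      gcongr ?_ - ?_ * _ - ?_ * _ - ?_ * _
      · exact lyapunov_coeff_dir_bound hμ.ne' hL1 hα.le hΦ hu hg
      · exact lyapunov_coeff_y_bound hμ hL1 hμLg1 hg
      · exact lyapunov_coeff_u_bound hL1 hg

/-- Lyapunov descent step in the proof of Theorem 3.2 of the paper, with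
`b_y = 4L₁` and `b_u = μ²/(8L₁)`. -/
theorem stmt_16
    (μ L1 Lg1 Lu LΦ α : ℝ)
    (hμ : 0 < μ) (hL1 : 0 < L1) (hLg1 : 0 < Lg1) (hLu : 0 < Lu) (hLΦ : 0 < LΦ)
    (hμLg1 : μ ≤ Lg1)
    (hα : 0 < α)
    (hαle : α ≤ min (min (1 / (4 * LΦ)) (L1 / (4 * Lu ^ 2))) (μ ^ 2 / (64 * L1 * Lg1 ^ 2)))
    (p p' : ℝ) (a a' b b' G D : ℝ)
    (ha : 0 ≤ a) (ha' : 0 ≤ a') (hb : 0 ≤ b) (hb' : 0 ≤ b') (hG : 0 ≤ G) (hD : 0 ≤ D)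
    (hp : p' ≤ p - α / 2 * G ^ 2 - (α / 2 - LΦ * α ^ 2 / 2) * D ^ 2
      + L1 ^ 2 * α * a ^ 2 + Lg1 ^ 2 * α * b ^ 2)
    (haRec : a' ^ 2 ≤ a ^ 2 / 2 + 2 * Lg1 ^ 2 * α ^ 2 / μ ^ 2 * D ^ 2)
    (hbRec : b' ^ 2 ≤ b ^ 2 / 8 + 8 * L1 ^ 2 / μ ^ 2 * a ^ 2 + 4 * Lu ^ 2 * α ^ 2 / μ ^ 2 * D ^ 2) :
    (p' + 4 * L1 * a' ^ 2 + μ ^ 2 / (8 * L1) * b' ^ 2)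
      - (p + 4 * L1 * a ^ 2 + μ ^ 2 / (8 * L1) * b ^ 2)
      ≤ -(α / 2) * G ^ 2 - α / 8 * D ^ 2 - 4 * L1 / 8 * a ^ 2
        - 7 * (μ ^ 2 / (8 * L1)) / 16 * b ^ 2 :=
  stmt_16_general μ L1 Lg1 Lu LΦ α hμ hL1 hLΦ hμLg1 hα hαle p p' a a' b b' G D hp haRec hbRec
end

section
/- Let Y be a finite-dimensional real inner product space, (Ω, ℱ, P) a probability space, and h : Y → ℝ a differentiable function that is μ-strongly convex (i.e., y ↦ h(y) − (μ/2)‖y‖² is convex, μ > 0) and whose gradient ∇h is L-Lipschitz (μ ≤ L). Let y* ∈ Y satisfy ∇h(y*) = 0 and let 0 < β ≤ 1/L. Fix y ∈ Y and let G : Ω → Y be an integrable random vector with 𝔼[G] = ∇h(y) and 𝔼[‖G − ∇h(y)‖²] ≤ σ². Then 𝔼[‖y − βG − y*‖²] ≤ (1 − μβ)‖y − y*‖² + β²σ². -/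
/-!
The expectation splits as the deterministic step plus variance:
`E‖x - βG‖² = ‖x - β∇h(y)‖² + β² E‖G - ∇h(y)‖²` since `G - ∇h(y)` has mean zero.
For the deterministic gradient step, strong convexity gives
`⟪∇h(y), y - y*⟫ ≥ h y - h y* + μ/2 ‖y - y*‖²`, while the descent lemma at the step `β ≤ 1/L`
together with minimality of `y*` gives `β² ‖∇h(y)‖² ≤ 2β (h y - h y*)`; in the expansion of
`‖y - y* - β∇h(y)‖²` the function gaps cancel, leaving `(1 - μβ) ‖y - y*‖²`.
-/

open MeasureTheory

open Set AffineMap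
open scoped RealInnerProductSpace

section Gradient

variable {E : Type*} [NormedAddCommGroup E]

theorem ConvexOn.add_fderiv_sub_le [NormedSpace ℝ E] {f : E → ℝ} {f' : E →L[ℝ] ℝ} {a : E}
    (hf : ConvexOn ℝ univ f) (hf' : HasFDerivAt f f' a) (b : E) : f a + f' (b - a) ≤ f b := by
  have hline : ConvexOn ℝ univ (f ∘ (lineMap a b : ℝ → E)) := by
    simpa using hf.comp_affineMap (lineMap a b : ℝ →ᵃ[ℝ] E)
  have hderiv : HasDerivAt (f ∘ (lineMap a b : ℝ → E)) (f' (b - a)) 0 :=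
    (lineMap_apply_zero a b (k := ℝ) ▸ hf').comp_hasDerivAt 0 hasDerivAt_lineMap
  have hslope := hline.le_slope_of_hasDerivAt (mem_univ 0) (mem_univ 1) one_pos hderiv
  simp only [slope_def_field, Function.comp_apply, lineMap_apply_one, lineMap_apply_zero,
    sub_zero, div_one] at hslope
  linarith

variable [InnerProductSpace ℝ E] [CompleteSpace E]

theorem StrongConvexOn.add_inner_sub_add_le {f : E → ℝ} {g : E} {μ : ℝ} {a : E}
    (hf : StrongConvexOn univ μ f) (hg : HasGradientAt f g a) (b : E) :
    f a + ⟪g, b - a⟫ + μ / 2 * ‖b - a‖ ^ 2 ≤ f b := by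
  have hq := (strongConvexOn_iff_convex.mp hf).add_fderiv_sub_le
    (hg.hasFDerivAt.sub ((hasStrictFDerivAt_norm_sq a).hasFDerivAt.const_mul (μ / 2))) b
  simp only [sub_apply, smul_apply, InnerProductSpace.toDual_apply_apply, innerSL_apply_apply,
    smul_eq_mul, nsmul_eq_mul, Nat.cast_ofNat, inner_sub_right, real_inner_self_eq_norm_sq] at hq
  rw [norm_sub_sq_real, real_inner_comm a b, inner_sub_right]
  linarith

theorem le_add_inner_sub_add_of_lipschitz_gradient {f : E → ℝ} {gf : E → E} {L : ℝ}
    (hgrad : ∀ x, HasGradientAt f (gf x) x) (hLip : ∀ x y, ‖gf x - gf y‖ ≤ L * ‖x - y‖)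
    (a b : E) : f b ≤ f a + ⟪gf a, b - a⟫ + L / 2 * ‖b - a‖ ^ 2 := by
  let ψ : ℝ → ℝ := fun t ↦
    f (lineMap a b t) - t * ⟪gf a, b - a⟫ - t ^ 2 * (L / 2 * ‖b - a‖ ^ 2)
  have hψ : ∀ t, HasDerivAt ψ
      (⟪gf (lineMap a b t), b - a⟫ - ⟪gf a, b - a⟫ - t * (L * ‖b - a‖ ^ 2)) t := by
    intro t
    have hline := (hgrad (lineMap a b t)).hasFDerivAt.comp_hasDerivAt t hasDerivAt_lineMap
    refine ((hline.sub ((hasDerivAt_id t).mul_const ⟪gf a, b - a⟫)).sub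
      ((hasDerivAt_pow 2 t).mul_const (L / 2 * ‖b - a‖ ^ 2))).congr_deriv ?_
    simp only [InnerProductSpace.toDual_apply_apply, one_mul, Nat.cast_ofNat]
    ring
  have hgrad_increment : ∀ t, 0 ≤ t →
      ⟪gf (lineMap a b t), b - a⟫ - ⟪gf a, b - a⟫ ≤ t * (L * ‖b - a‖ ^ 2) := by
    intro t ht
    have hdist : ‖lineMap a b t - a‖ = t * ‖b - a‖ := by
      simpa [dist_eq_norm, abs_of_nonneg ht, norm_sub_rev] using dist_lineMap_left a b t
    calc ⟪gf (lineMap a b t), b - a⟫ - ⟪gf a, b - a⟫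
        = ⟪gf (lineMap a b t) - gf a, b - a⟫ := (inner_sub_left _ _ _).symm
      _ ≤ ‖gf (lineMap a b t) - gf a‖ * ‖b - a‖ := real_inner_le_norm _ _
      _ ≤ L * ‖lineMap a b t - a‖ * ‖b - a‖ := by gcongr; exact hLip _ _
      _ = t * (L * ‖b - a‖ ^ 2) := by rw [hdist]; ring
  have hanti : AntitoneOn ψ (Ici 0) :=
    antitoneOn_of_hasDerivWithinAt_nonpos (convex_Ici 0)
      (fun t _ ↦ (hψ t).continuousAt.continuousWithinAt) (fun t _ ↦ (hψ t).hasDerivWithinAt)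
      (fun t ht ↦ by rw [interior_Ici] at ht; linarith [hgrad_increment t ht.le])
  have h01 : ψ 1 ≤ ψ 0 := hanti self_mem_Ici (mem_Ici.2 zero_le_one) zero_le_one
  simp only [ψ, lineMap_apply_one, lineMap_apply_zero] at h01
  linarith

theorem StrongConvexOn.norm_sub_sub_smul_gradient_sq_le {f : E → ℝ} {gf : E → E} {μ L β : ℝ}
    (hf : StrongConvexOn univ μ f) (hgrad : ∀ x, HasGradientAt f (gf x) x)
    (hLip : ∀ x y, ‖gf x - gf y‖ ≤ L * ‖x - y‖) (hμ : 0 ≤ μ) (hβ : 0 ≤ β) (hβL : β * L ≤ 1)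
    {m : E} (hm : gf m = 0) (x : E) :
    ‖x - m - β • gf x‖ ^ 2 ≤ (1 - μ * β) * ‖x - m‖ ^ 2 := by
  set g := gf x
  have hmin : f m ≤ f (x - β • g) := by
    have := hf.add_inner_sub_add_le (hgrad m) (x - β • g)
    rw [hm, inner_zero_left, add_zero] at this
    nlinarith [sq_nonneg ‖x - β • g - m‖]
  have hdescent := le_add_inner_sub_add_of_lipschitz_gradient hgrad hLip x (x - β • g)
  rw [sub_sub_cancel_left, inner_neg_right, norm_neg, real_inner_smul_right,
    real_inner_self_eq_norm_sq, norm_smul, Real.norm_of_nonneg hβ] at hdescent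
  have hgrad_sq : β ^ 2 * ‖g‖ ^ 2 ≤ 2 * β * (f x - f m) := by
    nlinarith [mul_nonneg (mul_nonneg hβ hβ) (sq_nonneg ‖g‖)]
  have hinner : f x - f m + μ / 2 * ‖x - m‖ ^ 2 ≤ ⟪g, x - m⟫ := by
    have := hf.add_inner_sub_add_le (hgrad x) m
    rw [← neg_sub x m, inner_neg_right, norm_neg] at this
    linarith
  calc ‖x - m - β • g‖ ^ 2 = ‖x - m‖ ^ 2 - 2 * β * ⟪g, x - m⟫ + β ^ 2 * ‖g‖ ^ 2 := by
        rw [norm_sub_sq_real, real_inner_smul_right, norm_smul, Real.norm_of_nonneg hβ,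
          real_inner_comm]
        ring
    _ ≤ ‖x - m‖ ^ 2 - 2 * β * (f x - f m + μ / 2 * ‖x - m‖ ^ 2) + 2 * β * (f x - f m) := by
        gcongr
    _ = (1 - μ * β) * ‖x - m‖ ^ 2 := by ring

theorem integral_norm_sub_smul_sq {Ω : Type*} [MeasurableSpace Ω] {P : Measure Ω}
    [IsProbabilityMeasure P] {G : Ω → E} {m : E} (hG : Integrable G P)
    (hm : ∫ ω, G ω ∂P = m) (hvar : Integrable (fun ω ↦ ‖G ω - m‖ ^ 2) P) (x : E) (c : ℝ) :
    ∫ ω, ‖x - c • G ω‖ ^ 2 ∂P = ‖x - c • m‖ ^ 2 + c ^ 2 * ∫ ω, ‖G ω - m‖ ^ 2 ∂P := by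
  have hpoint : ∀ ω, ‖x - c • G ω‖ ^ 2 =
      ‖x - c • m‖ ^ 2 - 2 * c * ⟪x - c • m, G ω - m⟫ + c ^ 2 * ‖G ω - m‖ ^ 2 := by
    intro ω
    rw [show x - c • G ω = (x - c • m) - c • (G ω - m) by rw [smul_sub]; abel,
      norm_sub_sq_real, real_inner_smul_right, norm_smul, mul_pow, Real.norm_eq_abs, sq_abs]
    ring
  have hcentered : Integrable (fun ω ↦ G ω - m) P := hG.sub (integrable_const m)
  have hinner : Integrable (fun ω ↦ 2 * c * ⟪x - c • m, G ω - m⟫) P :=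
    (hcentered.const_inner _).const_mul _
  have hmean_zero : ∫ ω, ⟪x - c • m, G ω - m⟫ ∂P = 0 := by
    simp [integral_inner hcentered, integral_sub hG (integrable_const m), hm]
  have hfirst : Integrable (fun ω ↦ ‖x - c • m‖ ^ 2 - 2 * c * ⟪x - c • m, G ω - m⟫) P :=
    (integrable_const _).sub hinner
  simp_rw [hpoint]
  rw [integral_add hfirst (hvar.const_mul _), integral_sub (integrable_const _) hinner,
    integral_const_mul, integral_const_mul, hmean_zero]
  simp

end Gradient

theorem stmt_17_general
    {Y : Type*} [NormedAddCommGroup Y] [InnerProductSpace ℝ Y] [FiniteDimensional ℝ Y]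
    {Ω : Type*} [MeasurableSpace Ω] (P : Measure Ω) [IsProbabilityMeasure P]
    (h : Y → ℝ) (gradh : Y → Y) (μ L β σ : ℝ) (hμ : 0 < μ)
    (hgrad : ∀ y : Y, HasGradientAt h (gradh y) y)
    (hconv : ConvexOn ℝ Set.univ (fun y : Y => h y - μ / 2 * ‖y‖ ^ 2))
    (hLip : ∀ a b : Y, ‖gradh a - gradh b‖ ≤ L * ‖a - b‖)
    (ystar : Y) (hstar : gradh ystar = 0)
    (hβ : 0 < β) (hβle : β ≤ 1 / L)
    (y : Y) (G : Ω → Y)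
    (hGint : Integrable G P)
    (hmean : ∫ ω, G ω ∂P = gradh y)
    (hvarint : Integrable (fun ω => ‖G ω - gradh y‖ ^ 2) P)
    (hvar : ∫ ω, ‖G ω - gradh y‖ ^ 2 ∂P ≤ σ ^ 2) :
    ∫ ω, ‖y - β • G ω - ystar‖ ^ 2 ∂P ≤ (1 - μ * β) * ‖y - ystar‖ ^ 2 + β ^ 2 * σ ^ 2 := by
  have hL : 0 < L := one_div_pos.mp (hβ.trans_le hβle)
  have hβL : β * L ≤ 1 := (le_div_iff₀ hL).mp hβle
  have hstep := (strongConvexOn_iff_convex.mpr hconv).norm_sub_sub_smul_gradient_sq_le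
    hgrad hLip hμ.le hβ.le hβL hstar y
  simp_rw [sub_right_comm y _ ystar]
  rw [integral_norm_sub_smul_sq hGint hmean hvarint]
  gcongr

/-- One-step stochastic gradient descent inequality (eq. 12eq in the proof of Lemma B.2):
a single SGD step with an unbiased gradient estimator of variance at most `σ²` contracts
the expected squared distance to the minimizer up to an additive variance term. -/
theorem stmt_17
    {Y : Type*} [NormedAddCommGroup Y] [InnerProductSpace ℝ Y] [FiniteDimensional ℝ Y]
    {Ω : Type*} [MeasurableSpace Ω] (P : Measure Ω) [IsProbabilityMeasure P]
    (h : Y → ℝ) (gradh : Y → Y) (μ L β σ : ℝ) (hμ : 0 < μ) (hμL : μ ≤ L)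
    (hgrad : ∀ y : Y, HasGradientAt h (gradh y) y)
    (hconv : ConvexOn ℝ Set.univ (fun y : Y => h y - μ / 2 * ‖y‖ ^ 2))
    (hLip : ∀ a b : Y, ‖gradh a - gradh b‖ ≤ L * ‖a - b‖)
    (ystar : Y) (hstar : gradh ystar = 0)
    (hβ : 0 < β) (hβle : β ≤ 1 / L)
    (y : Y) (G : Ω → Y)
    (hGint : Integrable G P)
    (hmean : ∫ ω, G ω ∂P = gradh y)
    (hvarint : Integrable (fun ω => ‖G ω - gradh y‖ ^ 2) P)
    (hvar : ∫ ω, ‖G ω - gradh y‖ ^ 2 ∂P ≤ σ ^ 2) :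
    ∫ ω, ‖y - β • G ω - ystar‖ ^ 2 ∂P ≤ (1 - μ * β) * ‖y - ystar‖ ^ 2 + β ^ 2 * σ ^ 2 :=
  stmt_17_general P h gradh μ L β σ hμ hgrad hconv hLip ystar hstar hβ hβle y G hGint hmean hvarint
    hvar
end

section
/- Let Y be a finite-dimensional real inner product space and (Ω, ℱ, P) a probability space. Let H : Y →L[ℝ] Y be self-adjoint with μ‖v‖² ≤ ⟨Hv, v⟩ ≤ L‖v‖² for all v (0 < μ ≤ L), let 0 < β ≤ 1/L, let c ∈ Y, and let u* ∈ Y satisfy H(u*) = c. Let Ĥ : Ω → (Y →L[ℝ] Y) and ĉ : Ω → Y be integrable random elements with 𝔼[Ĥ] = H, 𝔼[ĉ] = c, 𝔼[‖Ĥ − H‖_op²] ≤ S₂, and 𝔼[‖ĉ − c‖²] ≤ S_f, and assume β S₂ ≤ μ/8. Then for every u ∈ Y: 𝔼[‖u − β(Ĥ(u) − ĉ) − u*‖²] ≤ (1 − βμ/2)‖u − u*‖² + 2β² S_f + 4β² S₂ ‖u*‖². -/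
open MeasureTheory
open scoped RealInnerProductSpace

/-!
With `d = u - u*`, the iterate error is `(d - β H d) - β ξ` where
`ξ = (Ĥ - H) u - (ĉ - c)` has mean zero, so its expected square norm splits as
`‖d - β H d‖² + β² 𝔼‖ξ‖²`. The deterministic part is at most `(1 - βμ)‖d‖²` because
`H² ≤ L H` and `βL ≤ 1`; the noise is at most `2β²(S₂‖u‖² + S_f)`, and after
`‖u‖² ≤ 2‖d‖² + 2‖u*‖²` the condition `β S₂ ≤ μ/8` absorbs its `‖d‖²` part into half of
the contraction.
-/

lemma norm_add_sq_le_two_mul {E : Type*} [SeminormedAddCommGroup E] (x y : E) :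
    ‖x + y‖ ^ 2 ≤ 2 * (‖x‖ ^ 2 + ‖y‖ ^ 2) :=
  (pow_le_pow_left₀ (norm_nonneg _) (norm_add_le x y) 2).trans add_sq_le

lemma norm_sub_sq_le_two_mul {E : Type*} [SeminormedAddCommGroup E] (x y : E) :
    ‖x - y‖ ^ 2 ≤ 2 * (‖x‖ ^ 2 + ‖y‖ ^ 2) :=
  (pow_le_pow_left₀ (norm_nonneg _) (norm_sub_le x y) 2).trans add_sq_le

lemma norm_apply_sub_sq_le {E F : Type*} [SeminormedAddCommGroup E] [NormedSpace ℝ E]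
    [SeminormedAddCommGroup F] [NormedSpace ℝ F] (A : E →L[ℝ] F) (u : E) (y : F) :
    ‖A u - y‖ ^ 2 ≤ 2 * (‖A‖ ^ 2 * ‖u‖ ^ 2 + ‖y‖ ^ 2) := by
  have hAu : ‖A u‖ ^ 2 ≤ ‖A‖ ^ 2 * ‖u‖ ^ 2 := by
    rw [← mul_pow]; exact pow_le_pow_left₀ (norm_nonneg _) (A.le_opNorm u) 2
  linarith [norm_sub_sq_le_two_mul (A u) y]

section SelfAdjoint

variable {E : Type*} [NormedAddCommGroup E] [InnerProductSpace ℝ E] {H : E →L[ℝ] E} {L : ℝ}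

lemma norm_apply_sq_le_mul_inner_apply_self (hsym : ∀ v w : E, ⟪H v, w⟫ = ⟪v, H w⟫)
    (hpos : ∀ v : E, 0 ≤ ⟪H v, v⟫) (hub : ∀ v : E, ⟪H v, v⟫ ≤ L * ‖v‖ ^ 2) (hL : 0 < L)
    (v : E) : ‖H v‖ ^ 2 ≤ L * ⟪H v, v⟫ := by
  -- positivity of `H` at `v - L⁻¹ • H v`, together with `⟪H (H v), H v⟫ ≤ L ‖H v‖²`
  have hquad := hpos (v - L⁻¹ • H v)
  simp only [map_sub, map_smul, inner_sub_left, inner_sub_right, real_inner_smul_left,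
    real_inner_smul_right, hsym (H v) v, real_inner_self_eq_norm_sq] at hquad
  have hHH : L⁻¹ * ⟪H (H v), H v⟫ ≤ ‖H v‖ ^ 2 := by
    rw [inv_mul_le_iff₀ hL]; exact hub (H v)
  have hHv : L⁻¹ * ‖H v‖ ^ 2 ≤ ⟪H v, v⟫ := by
    linarith [mul_le_mul_of_nonneg_left hHH (inv_nonneg.2 hL.le)]
  rwa [inv_mul_le_iff₀ hL] at hHv

lemma norm_sub_smul_apply_sq_le {μ β : ℝ} (hsym : ∀ v w : E, ⟪H v, w⟫ = ⟪v, H w⟫)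
    (hμ : 0 ≤ μ) (hlb : ∀ v : E, μ * ‖v‖ ^ 2 ≤ ⟪H v, v⟫) (hub : ∀ v : E, ⟪H v, v⟫ ≤ L * ‖v‖ ^ 2)
    (hL : 0 < L) (hβ : 0 ≤ β) (hβL : β * L ≤ 1) (v : E) :
    ‖v - β • H v‖ ^ 2 ≤ (1 - β * μ) * ‖v‖ ^ 2 := by
  have hpos : ∀ w : E, 0 ≤ ⟪H w, w⟫ := fun w => (mul_nonneg hμ (sq_nonneg _)).trans (hlb w)
  have hH := norm_apply_sq_le_mul_inner_apply_self hsym hpos hub hL v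
  rw [norm_sub_sq_real, real_inner_smul_right, real_inner_comm, norm_smul, mul_pow,
    Real.norm_eq_abs, sq_abs]
  linarith [mul_le_mul_of_nonneg_left hH (sq_nonneg β), mul_le_mul_of_nonneg_left (hlb v) hβ,
    mul_le_mul_of_nonneg_right (mul_le_mul_of_nonneg_left hβL hβ) (hpos v)]

end SelfAdjoint

lemma integral_norm_sub_sq_of_integral_eq_zero {Ω E : Type*} [MeasurableSpace Ω] {P : Measure Ω}
    [IsProbabilityMeasure P] [NormedAddCommGroup E] [InnerProductSpace ℝ E] [CompleteSpace E]
    {X : Ω → E} (hX : Integrable X P) (hX2 : Integrable (fun ω => ‖X ω‖ ^ 2) P)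
    (hX0 : ∫ ω, X ω ∂P = 0) (a : E) :
    ∫ ω, ‖a - X ω‖ ^ 2 ∂P = ‖a‖ ^ 2 + ∫ ω, ‖X ω‖ ^ 2 ∂P := by
  have hcross : Integrable (fun ω => 2 * ⟪a, X ω⟫) P := (hX.const_inner a).const_mul 2
  have hbias : Integrable (fun ω => ‖a‖ ^ 2 - 2 * ⟪a, X ω⟫) P := (integrable_const _).sub hcross
  simp_rw [norm_sub_sq_real]
  rw [integral_add hbias hX2, integral_sub (integrable_const _) hcross,
    integral_const_mul, integral_inner hX, hX0]
  simp

section Noise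

variable {Ω : Type*} [MeasurableSpace Ω] {P : Measure Ω} {E F : Type*}
  [NormedAddCommGroup E] [NormedSpace ℝ E] [NormedAddCommGroup F]

section

variable [NormedSpace ℝ F] {A : Ω → E →L[ℝ] F} {b : Ω → F}

lemma integrable_norm_apply_sub_sq (hA : AEStronglyMeasurable A P)
    (hb : AEStronglyMeasurable b P) (hA2 : Integrable (fun ω => ‖A ω‖ ^ 2) P)
    (hb2 : Integrable (fun ω => ‖b ω‖ ^ 2) P) (u : E) :
    Integrable (fun ω => ‖A ω u - b ω‖ ^ 2) P := by
  have hdom : Integrable (fun ω => 2 * (‖A ω‖ ^ 2 * ‖u‖ ^ 2 + ‖b ω‖ ^ 2)) P :=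
    ((hA2.mul_const _).add hb2).const_mul 2
  refine hdom.mono' ?_ (.of_forall fun ω => ?_)
  · exact ((hA.apply_continuousLinearMap u).sub hb).norm.pow 2
  · rw [Real.norm_of_nonneg (sq_nonneg _)]
    exact norm_apply_sub_sq_le (A ω) u (b ω)

lemma integral_norm_apply_sub_sq_le (hA : AEStronglyMeasurable A P)
    (hb : AEStronglyMeasurable b P) (hA2 : Integrable (fun ω => ‖A ω‖ ^ 2) P)
    (hb2 : Integrable (fun ω => ‖b ω‖ ^ 2) P) (u : E) :
    ∫ ω, ‖A ω u - b ω‖ ^ 2 ∂P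
      ≤ 2 * ((∫ ω, ‖A ω‖ ^ 2 ∂P) * ‖u‖ ^ 2 + ∫ ω, ‖b ω‖ ^ 2 ∂P) := by
  rw [← integral_mul_const, ← integral_add (hA2.mul_const _) hb2, ← integral_const_mul]
  exact integral_mono (integrable_norm_apply_sub_sq hA hb hA2 hb2 u)
    (((hA2.mul_const _).add hb2).const_mul 2) fun ω => norm_apply_sub_sq_le (A ω) u (b ω)

end

variable [InnerProductSpace ℝ F] [CompleteSpace F] [IsProbabilityMeasure P]
  {A : Ω → E →L[ℝ] F} {Abar : E →L[ℝ] F} {b : Ω → F} {bbar : F}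

lemma integral_norm_sub_smul_centered_sq_le (hA : Integrable A P) (hAmean : ∫ ω, A ω ∂P = Abar)
    (hb : Integrable b P) (hbmean : ∫ ω, b ω ∂P = bbar)
    (hA2 : Integrable (fun ω => ‖A ω - Abar‖ ^ 2) P)
    (hb2 : Integrable (fun ω => ‖b ω - bbar‖ ^ 2) P) (a : F) (β : ℝ) (u : E) :
    ∫ ω, ‖a - β • ((A ω - Abar) u - (b ω - bbar))‖ ^ 2 ∂P
      ≤ ‖a‖ ^ 2 + 2 * β ^ 2
          * ((∫ ω, ‖A ω - Abar‖ ^ 2 ∂P) * ‖u‖ ^ 2 + ∫ ω, ‖b ω - bbar‖ ^ 2 ∂P) := by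
  have hA' : Integrable (fun ω => A ω - Abar) P := hA.sub (integrable_const _)
  have hb' : Integrable (fun ω => b ω - bbar) P := hb.sub (integrable_const _)
  set X : Ω → F := fun ω => (A ω - Abar) u - (b ω - bbar)
  have hX : Integrable X P := (hA'.apply_continuousLinearMap u).sub hb'
  have hX0 : ∫ ω, X ω ∂P = 0 := by
    rw [integral_sub (hA'.apply_continuousLinearMap u) hb',
      ← ContinuousLinearMap.integral_apply hA',
      integral_sub hA (integrable_const _), integral_sub hb (integrable_const _), hAmean, hbmean]
    simp
  have hX2 : Integrable (fun ω => ‖X ω‖ ^ 2) P :=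
    integrable_norm_apply_sub_sq hA'.aestronglyMeasurable hb'.aestronglyMeasurable hA2 hb2 u
  have hβX2 : Integrable (fun ω => ‖β • X ω‖ ^ 2) P := by
    simpa only [norm_smul, mul_pow] using hX2.const_mul (‖β‖ ^ 2)
  show ∫ ω, ‖a - β • X ω‖ ^ 2 ∂P ≤ _
  have hβX0 : ∫ ω, β • X ω ∂P = 0 := by rw [integral_smul, hX0, smul_zero]
  rw [integral_norm_sub_sq_of_integral_eq_zero (X := fun ω => β • X ω) (hX.smul β) hβX2 hβX0]
  simp_rw [norm_smul, mul_pow, Real.norm_eq_abs, sq_abs]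
  rw [integral_const_mul]
  linarith [mul_le_mul_of_nonneg_left (integral_norm_apply_sub_sq_le hA'.aestronglyMeasurable
    hb'.aestronglyMeasurable hA2 hb2 u) (sq_nonneg β)]

end Noise

theorem stmt_18_general
    {Y : Type*} [NormedAddCommGroup Y] [InnerProductSpace ℝ Y] [FiniteDimensional ℝ Y]
    {Ω : Type*} [MeasurableSpace Ω] (P : Measure Ω) [IsProbabilityMeasure P]
    (H : Y →L[ℝ] Y) (μ L β S2 Sf : ℝ)
    (hsym : ∀ v w : Y, ⟪H v, w⟫ = ⟪v, H w⟫)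
    (hlb : ∀ v : Y, μ * ‖v‖ ^ 2 ≤ ⟪H v, v⟫)
    (hub : ∀ v : Y, ⟪H v, v⟫ ≤ L * ‖v‖ ^ 2)
    (hβ : 0 < β) (hβle : β ≤ 1 / L)
    (c ustar : Y) (hustar : H ustar = c)
    (Hhat : Ω → Y →L[ℝ] Y) (chat : Ω → Y)
    (hHint : Integrable Hhat P) (hcint : Integrable chat P)
    (hHmean : ∫ ω, Hhat ω ∂P = H) (hcmean : ∫ ω, chat ω ∂P = c)
    (hHvarint : Integrable (fun ω => ‖Hhat ω - H‖ ^ 2) P)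
    (hHvar : ∫ ω, ‖Hhat ω - H‖ ^ 2 ∂P ≤ S2)
    (hcvarint : Integrable (fun ω => ‖chat ω - c‖ ^ 2) P)
    (hcvar : ∫ ω, ‖chat ω - c‖ ^ 2 ∂P ≤ Sf)
    (hβS : β * S2 ≤ μ / 8) :
    ∀ u : Y,
      ∫ ω, ‖u - β • (Hhat ω u - chat ω) - ustar‖ ^ 2 ∂P
        ≤ (1 - β * μ / 2) * ‖u - ustar‖ ^ 2 + 2 * β ^ 2 * Sf + 4 * β ^ 2 * S2 * ‖ustar‖ ^ 2 := by
  intro u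
  have hL : 0 < L := by
    by_contra! hL
    exact (hβle.trans (one_div_nonpos.2 hL)).not_gt hβ
  have hβL : β * L ≤ 1 := (le_div_iff₀ hL).1 hβle
  have hS2 : 0 ≤ S2 := (integral_nonneg fun _ => sq_nonneg _).trans hHvar
  have hμ : 0 ≤ μ := by linarith [mul_nonneg hβ.le hS2]
  set d := u - ustar
  have hstep : ∀ ω, u - β • (Hhat ω u - chat ω) - ustar
      = (d - β • H d) - β • ((Hhat ω - H) u - (chat ω - c)) := by
    intro ω
    rw [map_sub, hustar, sub_apply]
    module
  have hdrift := norm_sub_smul_apply_sq_le hsym hμ hlb hub hL hβ.le hβL d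
  have hu : ‖u‖ ^ 2 ≤ 2 * (‖d‖ ^ 2 + ‖ustar‖ ^ 2) := by
    simpa [d] using norm_add_sq_le_two_mul d ustar
  simp_rw [hstep]
  calc _ ≤ ‖d - β • H d‖ ^ 2 + 2 * β ^ 2
          * ((∫ ω, ‖Hhat ω - H‖ ^ 2 ∂P) * ‖u‖ ^ 2 + ∫ ω, ‖chat ω - c‖ ^ 2 ∂P) :=
        integral_norm_sub_smul_centered_sq_le hHint hHmean hcint hcmean hHvarint hcvarint _ β u
    _ ≤ (1 - β * μ) * ‖d‖ ^ 2 + 2 * β ^ 2 * (S2 * (2 * (‖d‖ ^ 2 + ‖ustar‖ ^ 2)) + Sf) := by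
        gcongr
    _ ≤ _ := by
        linarith [mul_le_mul_of_nonneg_right hβS (mul_nonneg hβ.le (sq_nonneg ‖d‖))]

/-- One-step stochastic iteration bound for the linear-system variable in the proof of
Lemma B.2 of the paper. -/
theorem stmt_18
    {Y : Type*} [NormedAddCommGroup Y] [InnerProductSpace ℝ Y] [FiniteDimensional ℝ Y]
    {Ω : Type*} [MeasurableSpace Ω] (P : Measure Ω) [IsProbabilityMeasure P]
    (H : Y →L[ℝ] Y) (μ L β S2 Sf : ℝ) (hμ : 0 < μ) (hμL : μ ≤ L)
    (hsym : ∀ v w : Y, ⟪H v, w⟫ = ⟪v, H w⟫)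
    (hlb : ∀ v : Y, μ * ‖v‖ ^ 2 ≤ ⟪H v, v⟫)
    (hub : ∀ v : Y, ⟪H v, v⟫ ≤ L * ‖v‖ ^ 2)
    (hβ : 0 < β) (hβle : β ≤ 1 / L)
    (c ustar : Y) (hustar : H ustar = c)
    (Hhat : Ω → Y →L[ℝ] Y) (chat : Ω → Y)
    (hHint : Integrable Hhat P) (hcint : Integrable chat P)
    (hHmean : ∫ ω, Hhat ω ∂P = H) (hcmean : ∫ ω, chat ω ∂P = c)
    (hHvarint : Integrable (fun ω => ‖Hhat ω - H‖ ^ 2) P)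
    (hHvar : ∫ ω, ‖Hhat ω - H‖ ^ 2 ∂P ≤ S2)
    (hcvarint : Integrable (fun ω => ‖chat ω - c‖ ^ 2) P)
    (hcvar : ∫ ω, ‖chat ω - c‖ ^ 2 ∂P ≤ Sf)
    (hβS : β * S2 ≤ μ / 8) :
    ∀ u : Y,
      ∫ ω, ‖u - β • (Hhat ω u - chat ω) - ustar‖ ^ 2 ∂P
        ≤ (1 - β * μ / 2) * ‖u - ustar‖ ^ 2 + 2 * β ^ 2 * Sf + 4 * β ^ 2 * S2 * ‖ustar‖ ^ 2 :=
  stmt_18_general P H μ L β S2 Sf hsym hlb hub hβ hβle c ustar hustar Hhat chat hHint hcint hHmean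
    hcmean hHvarint hHvar hcvarint hcvar hβS
end
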